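/- arXiv:1906.04575 — 5 statements merged into one kernel-verified Lean document; each statement's English description precedes it below -/
import Mathlib

section
/- Let n > r ≥ k ≥ 2 and let m be a positive integer with m ≥ (n−1) · ln(2r) / ((r−1)(k−1)). Then the number of r-element subsets of the cyclically ordered n-element set Ω_n that have (k,m)-gaps is at most (1/2) · C(n, r). -/
/-- `NextIn R u u'` says that `u'` is the clockwise-next element of `R` after `u`:
both belong to `R`, they are distinct, and every other element of `R` is at clockwise
distance from `u` at least that of `u'`. -/
def NextIn {n : ℕ} (R : Finset (Fin n)) (u u' : Fin n) : Prop :=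
  u ∈ R ∧ u' ∈ R ∧ u' ≠ u ∧ ∀ x ∈ R, x ≠ u → u' - u ≤ x - u

/-- `HasGaps k m R` says that `R` has `(k,m)`-gaps: some `k-1` cyclically consecutive gaps of
`R` (the gaps between `k` cyclically consecutive elements `u 0, u 1, ..., u (k-1)` of `R`)
each contain at least `m` vertices of `Fin n` (the gap between consecutive elements
`u i` and `u (i+1)` contains `(u (i+1) - u i) - 1` vertices). -/
def HasGaps {n : ℕ} (k m : ℕ) (R : Finset (Fin n)) : Prop :=
  ∃ u : ℕ → Fin n, ∀ i : ℕ, i < k - 1 →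
    NextIn R (u i) (u (i + 1)) ∧ m + 1 ≤ ((u (i + 1) - u i : Fin n) : ℕ)

lemma finValSubOfLe {n : ℕ} {a b : Fin n} (h : b ≤ a) :
    ((a - b : Fin n) : ℕ) = a.val - b.val := by
  have h1 := Fin.coe_int_sub_eq_ite a b
  rw [if_pos h] at h1
  have h2 : (((a - b : Fin n) : ℕ) : ℤ) = ((a:ℕ) : ℤ) - ((b:ℕ):ℤ) := h1
  omega

lemma descFactMulPow {a b : ℕ} (hab : a ≤ b) :
    ∀ s : ℕ, a.descFactorial s * b ^ s ≤ b.descFactorial s * a ^ s := by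
  intro s
  induction s with
  | zero => simp
  | succ s ih =>
    rw [Nat.descFactorial_succ, Nat.descFactorial_succ, pow_succ, pow_succ]
    have h1 : (a - s) * b ≤ (b - s) * a := by
      rcases Nat.le_total s a with h | h
      · obtain ⟨c, rfl⟩ : ∃ c, a = s + c := ⟨a - s, by omega⟩
        obtain ⟨d, rfl⟩ : ∃ d, b = s + d := ⟨b - s, by omega⟩
        have hcd : c ≤ d := by omega
        simp only [Nat.add_sub_cancel_left]
        calc c * (s + d) = c * s + c * d := by ring
          _ ≤ d * s + c * d := by have := Nat.mul_le_mul_right s hcd; omega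
          _ = d * (s + c) := by ring
      · simp [Nat.sub_eq_zero_of_le h]
    calc (a - s) * a.descFactorial s * (b ^ s * b)
        = ((a - s) * b) * (a.descFactorial s * b ^ s) := by ring
      _ ≤ ((b - s) * a) * (b.descFactorial s * a ^ s) := Nat.mul_le_mul h1 ih
      _ = (b - s) * b.descFactorial s * (a ^ s * a) := by ring

lemma choosePow {a b : ℕ} (hab : a ≤ b) (s : ℕ) :
    a.choose s * b ^ s ≤ b.choose s * a ^ s := by
  have h := descFactMulPow hab s
  rw [Nat.descFactorial_eq_factorial_mul_choose, Nat.descFactorial_eq_factorial_mul_choose] at h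
  have h2 : Nat.factorial s * (a.choose s * b ^ s) ≤ Nat.factorial s * (b.choose s * a ^ s) := by
    calc Nat.factorial s * (a.choose s * b ^ s) = Nat.factorial s * a.choose s * b ^ s := by ring
      _ ≤ Nat.factorial s * b.choose s * a ^ s := h
      _ = Nat.factorial s * (b.choose s * a ^ s) := by ring
  exact Nat.le_of_mul_le_mul_left h2 s.factorial_pos

example : True := trivial

lemma analytic (n r k m : ℕ) (hk : 2 ≤ k) (hkr : k ≤ r) (hrn : r < n) (hm : 1 ≤ m)
    (hmb : ((n : ℝ) - 1) * Real.log (2 * r) / (((r : ℝ) - 1) * ((k : ℝ) - 1)) ≤ (m : ℝ)) :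
    (n : ℝ) * (((n - 1 - (k-1)*m).choose (r-1) : ℕ) : ℝ) ≤ (1/2) * (n.choose r : ℝ) := by
  set N := n - 1 with hN
  set s := r - 1 with hs
  set q := (k-1)*m with hq
  set a := N - q with ha
  have hr2 : 2 ≤ r := le_trans hk hkr
  have hn3 : 3 ≤ n := by omega
  have hNr : r ≤ N := by omega
  have hNpos : (0:ℝ) < N := by
    have : 0 < N := by omega
    exact_mod_cast this
  have hNR : (N:ℝ) = (n:ℝ) - 1 := by
    rw [hN]; push_cast [Nat.cast_sub (by omega : 1 ≤ n)]; ring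
  have hqpos : 1 ≤ q := by
    have : 1 ≤ k - 1 := by omega
    calc 1 = 1 * 1 := by ring
      _ ≤ (k-1) * m := Nat.mul_le_mul this hm
  have hL0 : 0 ≤ Real.log (2 * r) := by
    apply Real.log_nonneg
    have : (1:ℝ) ≤ (r:ℝ) := by exact_mod_cast (by omega : 1 ≤ r)
    nlinarith
  -- key real fact: q * s ≥ N * log (2r)
  have hqs : (N:ℝ) * Real.log (2*r) ≤ (q:ℝ) * (s:ℝ) := by
    have hden : (0:ℝ) < ((r:ℝ) - 1) * ((k:ℝ) - 1) := by
      have h1 : (2:ℝ) ≤ r := by exact_mod_cast hr2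
      have h2 : (2:ℝ) ≤ k := by exact_mod_cast hk
      nlinarith
    rw [div_le_iff₀ hden] at hmb
    have hcast : (q:ℝ) * (s:ℝ) = (m:ℝ) * (((r:ℝ)-1) * ((k:ℝ)-1)) := by
      rw [hq, hs]
      push_cast [Nat.cast_sub (by omega : 1 ≤ k), Nat.cast_sub (by omega : 1 ≤ r)]
      ring
    rw [hcast, hNR]
    exact hmb
  -- Step 2 : 2r * a^s ≤ N^s   (in ℝ)
  have step2 : (2:ℝ) * r * (a:ℝ)^s ≤ (N:ℝ)^s := by
    rcases Nat.eq_zero_or_pos a with h0 | hapos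
    · rw [h0]
      have hs1 : 1 ≤ s := by omega
      have : ((0:ℕ):ℝ)^s = 0 := by
        simp [zero_pow (by omega : s ≠ 0)]
      rw [this, mul_zero]
      positivity
    · have haR : (a:ℝ) = (N:ℝ) - (q:ℝ) := by
        rw [ha]
        have hqN : q ≤ N := by omega
        push_cast [Nat.cast_sub hqN]; ring
      have h2r : (0:ℝ) < 2 * r := by positivity
      have hexp : (a:ℝ) ≤ (N:ℝ) * Real.exp (-(q/N)) := by
        have h1 : -((q:ℝ)/N) + 1 ≤ Real.exp (-(q/N)) := Real.add_one_le_exp _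
        have h2 : (a:ℝ) = (N:ℝ) * (-((q:ℝ)/N) + 1) := by
          rw [haR]; field_simp
          ring
        rw [h2]
        exact mul_le_mul_of_nonneg_left h1 hNpos.le
      have hpow : (a:ℝ)^s ≤ ((N:ℝ) * Real.exp (-(q/N)))^s := by
        apply pow_le_pow_left₀ (by positivity) hexp
      have hexps : ((N:ℝ) * Real.exp (-(q/N)))^s = (N:ℝ)^s * Real.exp (-(q*s/N)) := by
        rw [mul_pow, ← Real.exp_nat_mul]
        congr 1
        push_cast
        ring
      have hfin : Real.exp (-((q:ℝ)*s/N)) ≤ 1 / (2*r) := by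
        rw [← Real.exp_log (by positivity : (0:ℝ) < 1/(2*(r:ℝ)))]
        apply Real.exp_le_exp.mpr
        rw [Real.log_div (by norm_num) (by positivity), Real.log_one]
        have : Real.log (2*(r:ℝ)) ≤ (q:ℝ)*s/N := by
          rw [le_div_iff₀ hNpos]
          calc Real.log (2*(r:ℝ)) * N = N * Real.log (2*r) := by ring
            _ ≤ (q:ℝ) * s := hqs
        linarith
      calc (2:ℝ) * r * (a:ℝ)^s ≤ 2 * r * ((N:ℝ)^s * Real.exp (-(q*s/N))) := by
            apply mul_le_mul_of_nonneg_left _ (by positivity)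
            rw [← hexps]; exact hpow
        _ ≤ 2 * r * ((N:ℝ)^s * (1/(2*r))) := by
            apply mul_le_mul_of_nonneg_left _ (by positivity)
            apply mul_le_mul_of_nonneg_left hfin (by positivity)
        _ = (N:ℝ)^s := by field_simp
  -- Step 1 : choose ratio
  have step1 : ((a.choose s : ℕ):ℝ) * (N:ℝ)^s ≤ ((N.choose s : ℕ):ℝ) * (a:ℝ)^s := by
    exact_mod_cast choosePow (by omega : a ≤ N) s
  -- Step 3 : n * C(N,s) = r * C(n,r)
  have step3 : (n:ℝ) * ((N.choose s : ℕ):ℝ) = (r:ℝ) * ((n.choose r : ℕ):ℝ) := by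
    have h := Nat.add_one_mul_choose_eq N s
    have hn' : N + 1 = n := by omega
    have hr' : s + 1 = r := by omega
    rw [hn', hr'] at h
    have h2 : n * N.choose s = r * n.choose r := by rw [h]; ring
    exact_mod_cast congrArg (Nat.cast (R := ℝ)) h2
  -- assemble
  have hNs : (0:ℝ) < (N:ℝ)^s := by positivity
  have hCn : (0:ℝ) ≤ ((N.choose s : ℕ):ℝ) := by positivity
  have main : (n:ℝ) * ((a.choose s:ℕ):ℝ) * (2*r) * (N:ℝ)^s ≤ (r:ℝ) * ((n.choose r:ℕ):ℝ) * (N:ℝ)^s := by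
    calc (n:ℝ) * ((a.choose s:ℕ):ℝ) * (2*r) * (N:ℝ)^s
        = (n:ℝ) * (2*r) * (((a.choose s:ℕ):ℝ) * (N:ℝ)^s) := by ring
      _ ≤ (n:ℝ) * (2*r) * (((N.choose s:ℕ):ℝ) * (a:ℝ)^s) := by
          apply mul_le_mul_of_nonneg_left step1 (by positivity)
      _ = (n:ℝ) * ((N.choose s:ℕ):ℝ) * (2 * r * (a:ℝ)^s) := by ring
      _ ≤ (n:ℝ) * ((N.choose s:ℕ):ℝ) * (N:ℝ)^s := by
          apply mul_le_mul_of_nonneg_left step2 (by positivity)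
      _ = (r:ℝ) * ((n.choose r:ℕ):ℝ) * (N:ℝ)^s := by rw [step3]
  have main2 : (n:ℝ) * ((a.choose s:ℕ):ℝ) * (2*r) ≤ (r:ℝ) * ((n.choose r:ℕ):ℝ) :=
    le_of_mul_le_mul_right main hNs
  have hrpos : (0:ℝ) < r := by exact_mod_cast (by omega : 0 < r)
  nlinarith [main2]

open Fin.NatCast Fin.CommRing

def decode (n k m r : ℕ) [NeZero n] (v : Fin n) (B : Finset ℕ) : Finset (Fin n) :=
  if h : B.card = r - 1 then
    insert v ((Finset.univ : Finset (Fin (r-1))).image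
      (fun j => v + (((B.orderEmbOfFin h j) + min ((j:ℕ)+1) (k-1) * m : ℕ) : Fin n)))
  else ∅

set_option maxHeartbeats 1000000 in
lemma exists_code {n r k m : ℕ} [NeZero n] (hk : 2 ≤ k) (hkr : k ≤ r) (hrn : r < n)
    (hm : 1 ≤ m) {R : Finset (Fin n)} (hcard : R.card = r) (hg : HasGaps k m R) :
    ∃ v : Fin n, ∃ B : Finset ℕ, B ∈ (Finset.Icc 1 (n - 1 - (k-1)*m)).powersetCard (r-1) ∧
      R = decode n k m r v B := by
  obtain ⟨u, hu⟩ := hg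
  set v := u 0 with hv
  have h0 := hu 0 (by omega)
  have hvR : v ∈ R := h0.1.1
  -- the shifted set A
  set A : Finset ℕ := (R.erase v).image (fun x => ((x - v : Fin n) : ℕ)) with hA
  have hinj : Function.Injective (fun x : Fin n => ((x - v : Fin n) : ℕ)) := by
    intro x y hxy
    have : (x - v : Fin n) = (y - v) := Fin.val_injective hxy
    exact sub_left_injective this
  have hAcard : A.card = r - 1 := by
    rw [hA, Finset.card_image_of_injective _ hinj, Finset.card_erase_of_mem hvR, hcard]
  have hAmem : ∀ a ∈ A, 1 ≤ a ∧ a ≤ n - 1 := by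
    intro a haA
    rw [hA, Finset.mem_image] at haA
    obtain ⟨x, hx, rfl⟩ := haA
    have hxv : x ≠ v := Finset.ne_of_mem_erase hx
    constructor
    · have : (x - v : Fin n) ≠ 0 := sub_ne_zero_of_ne hxv
      have : ((x - v : Fin n) : ℕ) ≠ 0 := by
        exact fun h => this (Fin.ext (by rw [h]; simp))
      omega
    · have := (x - v : Fin n).isLt; omega
  set f := A.orderEmbOfFin hAcard with hf
  have hfA : ∀ j, f j ∈ A := fun j => Finset.orderEmbOfFin_mem A hAcard j
  have hAf : ∀ a ∈ A, ∃ j, f j = a := by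
    intro a haA
    have : a ∈ Set.range f := by rw [Finset.range_orderEmbOfFin]; exact_mod_cast haA
    exact this
  -- main induction
  have key : ∀ i : ℕ, ∀ hik : i < k - 1,
      ((u (i+1) - v : Fin n) : ℕ) = f ⟨i, by omega⟩ ∧
      (0 < i → ∀ hik' : i - 1 < r - 1, f ⟨i-1, hik'⟩ + (m+1) ≤ f ⟨i, by omega⟩) := by
    intro i
    induction i with
    | zero =>
      intro hik
      refine ⟨?_, by omega⟩
      have h1 := h0.1
      obtain ⟨_, hu1R, hu1v, hmin⟩ := h1
      have ha : ((u (0+1) - v : Fin n) : ℕ) ∈ A := by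
        rw [hA, Finset.mem_image]
        exact ⟨u (0+1), Finset.mem_erase.2 ⟨hu1v, hu1R⟩, rfl⟩
      obtain ⟨j, hj⟩ := hAf _ ha
      have h1 : f ⟨0, by omega⟩ ≤ f j :=
        (A.orderEmbOfFin hAcard).monotone (by simp [Fin.le_def])
      have h2 : f ⟨0, by omega⟩ ∈ A := hfA _
      rw [hA, Finset.mem_image] at h2
      obtain ⟨x, hx, hxe⟩ := h2
      have h3 : ((u (0+1) - v : Fin n) : ℕ) ≤ f ⟨0, by omega⟩ := by
        rw [← hxe]
        exact hmin x (Finset.mem_of_mem_erase hx) (Finset.ne_of_mem_erase hx)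
      omega
    | succ i ih =>
      intro hik
      have hik0 : i < k - 1 := by omega
      have hi1 : i < r - 1 := by omega
      have hi2 : i + 1 < r - 1 := by omega
      obtain ⟨ei, -⟩ := ih hik0
      have hstep := hu (i+1) hik
      obtain ⟨⟨hwR, hw'R, hw'w, hmin⟩, hgap⟩ := hstep
      set a : ℕ := f ⟨i, hi1⟩ with ha2
      set b : ℕ := f ⟨i+1, hi2⟩ with hb2
      have hvw : (((u (i+1)) - v : Fin n) : ℕ) = a := ei
      clear_value a b
      have hab : a < b := by
        rw [ha2, hb2]
        exact (A.orderEmbOfFin hAcard).strictMono (by simp [Fin.lt_def])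
      -- the witness x* with value b
      have hbA : b ∈ A := by rw [hb2]; exact hfA _
      rw [hA, Finset.mem_image] at hbA
      obtain ⟨xs, hxs, hxse⟩ := hbA
      have hxsw : xs ≠ (u (i+1)) := by
        intro hcon
        rw [hcon] at hxse
        rw [hvw] at hxse
        omega
      have hxsR : xs ∈ R := Finset.mem_of_mem_erase hxs
      have hminx := hmin xs hxsR hxsw
      have hxv : ((xs - v : Fin n) : ℕ) = b := hxse
      have hle : ((u (i+1)) - v : Fin n) ≤ (xs - v : Fin n) := by
        rw [Fin.le_def, hvw, hxv]; omega
      have hxsw2 : xs - (u (i+1)) = (xs - v) - ((u (i+1)) - v) := by ring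
      have hxswval : ((xs - (u (i+1)) : Fin n) : ℕ) = b - a := by
        rw [hxsw2, finValSubOfLe hle, hvw, hxv]
      -- val ((u (i+1+1)) - (u (i+1))) ≤ b - a
      have hww' : (((u (i+1+1)) - (u (i+1)) : Fin n) : ℕ) ≤ b - a := by
        have := hminx
        rw [Fin.le_def] at this
        omega
      -- val ((u (i+1+1)) - v) = val((u (i+1+1))-(u (i+1))) + a
      have hw'v : (u (i+1+1)) - v = ((u (i+1+1)) - (u (i+1))) + ((u (i+1)) - v) := by ring
      have ha1 : 1 ≤ a := by
        refine (hAmem a ?_).1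
        rw [ha2]; exact hfA _
      have hbn : b ≤ n - 1 := by
        refine (hAmem b ?_).2
        rw [hb2]; exact hfA _
      have hsum : (((u (i+1+1)) - v : Fin n) : ℕ) = (((u (i+1+1)) - (u (i+1)) : Fin n) : ℕ) + a := by
        rw [hw'v]
        rw [Fin.val_add_eq_of_add_lt]
        · rw [hvw]
        · rw [hvw]; omega
      -- c ∈ A
      have hw'ne : (u (i+1+1)) ≠ v := by
        intro hcon
        rw [hcon] at hsum
        simp at hsum
        omega
      have hcA : (((u (i+1+1)) - v : Fin n) : ℕ) ∈ A := by
        rw [hA, Finset.mem_image]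
        exact ⟨(u (i+1+1)), Finset.mem_erase.2 ⟨hw'ne, hw'R⟩, rfl⟩
      obtain ⟨j, hj⟩ := hAf _ hcA
      have hja : a < f j := by rw [hj]; omega
      have hjb : f j ≤ b := by rw [hj, hsum]; omega
      have hj1 : (⟨i, hi1⟩ : Fin (r-1)) < j := by
        by_contra hcon
        push_neg at hcon
        exact absurd ((A.orderEmbOfFin hAcard).monotone hcon) (by rw [← hf, ← ha2]; omega)
      have hj2 : j ≤ (⟨i+1, hi2⟩ : Fin (r-1)) := by
        by_contra hcon
        push_neg at hcon
        exact absurd ((A.orderEmbOfFin hAcard).strictMono hcon) (by rw [← hf, ← hb2]; omega)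
      have hjeq : j = (⟨i+1, hi2⟩ : Fin (r-1)) := by
        rw [Fin.lt_def] at hj1
        rw [Fin.le_def] at hj2
        apply Fin.ext
        simp at hj1 hj2 ⊢
        omega
      rw [hjeq] at hj
      have hgap2 : m + 1 ≤ (((u (i+1+1)) - (u (i+1)) : Fin n) : ℕ) := hgap
      refine ⟨?_, ?_⟩
      · rw [hb2]; exact hj.symm
      · intro _ hik'
        have hmk : (⟨i+1-1, hik'⟩ : Fin (r-1)) = ⟨i, hi1⟩ := by
          apply Fin.ext; simp
        rw [hmk, ← ha2]
        have hbval : b = (((u (i+1+1)) - (u (i+1)) : Fin n) : ℕ) + a := by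
          rw [hb2, hj, hsum]
        omega
  -- lower bound on f 0
  have hgap0 : m + 1 ≤ f ⟨0, by omega⟩ := by
    have h1 := (key 0 (by omega)).1
    have h2 := h0.2
    rw [hv] at h1
    omega
  have hstep1 : ∀ t, t < k - 1 → ∀ ht : t < r - 1, (t+1) * (m+1) ≤ f ⟨t, ht⟩ := by
    intro t
    induction t with
    | zero =>
      intro h ht
      have := hgap0
      simpa using this
    | succ t ih =>
      intro h ht
      have h1 := (key (t+1) h).2 (by omega) (by omega)
      simp only [Nat.add_sub_cancel] at h1
      have h2 := ih (by omega) (by omega)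
      have e : (t+1+1) * (m+1) = (t+1) * (m+1) + (m+1) := by ring
      omega
  have hlow : ∀ j : Fin (r-1), min ((j:ℕ)+1) (k-1) * (m+1) ≤ f j := by
    intro j
    rcases le_or_gt ((j:ℕ)+1) (k-1) with h | h
    · rw [min_eq_left h]
      have := hstep1 (j:ℕ) (by omega) j.isLt
      simpa using this
    · rw [min_eq_right (by omega)]
      have h1 := hstep1 (k-2) (by omega) (by omega)
      have h2 : f ⟨k-2, by omega⟩ ≤ f j := f.monotone (by rw [Fin.le_def]; simp; omega)
      have e : (k-2+1) = k-1 := by omega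
      rw [e] at h1
      omega
  set g : Fin (r-1) → ℕ := fun j => f j - min ((j:ℕ)+1) (k-1) * m with hg
  have hminle : ∀ j : Fin (r-1), min ((j:ℕ)+1) (k-1) * m + min ((j:ℕ)+1) (k-1) ≤ f j := by
    intro j
    have h1 := hlow j
    have e : min ((j:ℕ)+1) (k-1) * (m+1) = min ((j:ℕ)+1) (k-1) * m + min ((j:ℕ)+1) (k-1) := by
      ring
    omega
  have hgadj : ∀ (j j' : Fin (r-1)), (j':ℕ) = (j:ℕ) + 1 → g j < g j' := by
    intro j j' hjj
    have hm1 := hminle j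
    have hm2 := hminle j'
    simp only [hg]
    rcases lt_or_ge ((j:ℕ)+1) (k-1) with hc | hc
    · have e1 : min ((j:ℕ)+1) (k-1) = (j:ℕ)+1 := by omega
      have e2 : min ((j':ℕ)+1) (k-1) = (j:ℕ)+1+1 := by omega
      have hgapc := (key ((j:ℕ)+1) hc).2 (by omega) (by omega)
      simp only [Nat.add_sub_cancel] at hgapc
      have hje : (⟨(j:ℕ), by omega⟩ : Fin (r-1)) = j := by apply Fin.ext; rfl
      have hj'e : (⟨(j:ℕ)+1, by have := j'.isLt; omega⟩ : Fin (r-1)) = j' := by apply Fin.ext; simp only [Fin.val_mk]; omega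
      rw [hje, hj'e] at hgapc
      rw [e1, e2]
      have e3 : ((j:ℕ)+1+1) * m = ((j:ℕ)+1) * m + m := by ring
      rw [e1] at hm1
      rw [e2] at hm2
      omega
    · have e1 : min ((j:ℕ)+1) (k-1) = k-1 := by omega
      have e2 : min ((j':ℕ)+1) (k-1) = k-1 := by omega
      have hflt : f j < f j' := f.strictMono (by rw [Fin.lt_def]; omega)
      rw [e1, e2]
      rw [e1] at hm1
      rw [e2] at hm2
      omega
  have hgmono : StrictMono g := by
    have hchain : ∀ (d : ℕ) (j j' : Fin (r-1)), (j':ℕ) = (j:ℕ) + d + 1 → g j < g j' := by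
      intro d
      induction d with
      | zero => intro j j' h; exact hgadj j j' (by omega)
      | succ d ih =>
        intro j j' h
        have hmid : ((j:ℕ) + d + 1) < r - 1 := by have := j'.isLt; omega
        refine lt_trans (ih j ⟨(j:ℕ)+d+1, hmid⟩ (by simp)) (hgadj ⟨(j:ℕ)+d+1, hmid⟩ j' ?_)
        simp only [Fin.val_mk]
        omega
    intro j j' hlt
    rw [Fin.lt_def] at hlt
    exact hchain ((j':ℕ) - (j:ℕ) - 1) j j' (by omega)
  have hg1 : ∀ j, 1 ≤ g j := by
    intro j
    have h1 := hminle j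
    have hmin1 : 1 ≤ min ((j:ℕ)+1) (k-1) := by omega
    simp only [hg]
    omega
  have hgtop : ∀ j : Fin (r-1), g j ≤ n - 1 - (k-1)*m := by
    intro j
    have hr2 : r - 2 < r - 1 := by omega
    have hjle : j ≤ (⟨r-2, hr2⟩ : Fin (r-1)) := by
      rw [Fin.le_def]; simp only [Fin.val_mk]; have := j.isLt; omega
    have h1 : g j ≤ g ⟨r-2, hr2⟩ := hgmono.monotone hjle
    have h2 : min ((r-2:ℕ)+1) (k-1) = k-1 := by omega
    have h3 : f ⟨r-2, hr2⟩ ≤ n - 1 := (hAmem _ (hfA _)).2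
    have h4 := hminle ⟨r-2, hr2⟩
    simp only [Fin.val_mk, h2] at h4
    have h5 : g ⟨r-2, hr2⟩ = f ⟨r-2, hr2⟩ - (k-1)*m := by
      simp only [hg, Fin.val_mk, h2]
    omega
  set B : Finset ℕ := Finset.image g Finset.univ with hB
  have hBcard : B.card = r - 1 := by
    rw [hB, Finset.card_image_of_injective _ hgmono.injective, Finset.card_univ,
      Fintype.card_fin]
  have hBsub : B ⊆ Finset.Icc 1 (n - 1 - (k-1)*m) := by
    intro x hx
    rw [hB, Finset.mem_image] at hx
    obtain ⟨j, -, rfl⟩ := hx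
    rw [Finset.mem_Icc]
    exact ⟨hg1 j, hgtop j⟩
  have hgf : ∀ j : Fin (r-1), g j + min ((j:ℕ)+1) (k-1) * m = f j := by
    intro j
    have := hminle j
    simp only [hg]
    omega
  refine ⟨v, B, Finset.mem_powersetCard.2 ⟨hBsub, hBcard⟩, ?_⟩
  have hgeq : g = ⇑(B.orderEmbOfFin hBcard) :=
    Finset.orderEmbOfFin_unique hBcard
      (fun x => by rw [hB]; exact Finset.mem_image_of_mem _ (Finset.mem_univ x)) hgmono
  simp only [decode, dif_pos hBcard]
  have hbody : ∀ j : Fin (r-1),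
      v + (((B.orderEmbOfFin hBcard j) + min ((j:ℕ)+1) (k-1) * m : ℕ) : Fin n)
        = v + ((f j : ℕ) : Fin n) := by
    intro j
    rw [← hgeq, hgf]
  ext x
  simp only [Finset.mem_insert, Finset.mem_image, Finset.mem_univ, true_and]
  constructor
  · intro hxR
    by_cases hxv : x = v
    · exact Or.inl hxv
    · refine Or.inr ?_
      have hxA : ((x - v : Fin n):ℕ) ∈ A := by
        rw [hA, Finset.mem_image]
        exact ⟨x, Finset.mem_erase.2 ⟨hxv, hxR⟩, rfl⟩
      obtain ⟨j, hj⟩ := hAf _ hxA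
      refine ⟨j, ?_⟩
      rw [hbody j, hj, Fin.cast_val_eq_self]
      ring_nf
  · rintro (rfl | ⟨j, hj⟩)
    · exact hvR
    · rw [hbody j] at hj
      have hfj : f j ∈ A := hfA j
      rw [hA, Finset.mem_image] at hfj
      obtain ⟨y, hy, hye⟩ := hfj
      rw [← hj, ← hye, Fin.cast_val_eq_self]
      have he : v + (y - v) = y := by ring
      rw [he]
      exact Finset.mem_of_mem_erase hy

/-- Let `n > r ≥ k ≥ 2` and let `m ≥ 1` satisfy
`m ≥ (n−1)·ln(2r)/((r−1)(k−1))`. Then the number of `r`-element subsets of the cyclically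
ordered set `Fin n` having `(k,m)`-gaps is at most `(1/2)·C(n,r)`. -/
theorem stmt11 (n r k m : ℕ) (hk : 2 ≤ k) (hkr : k ≤ r) (hrn : r < n) (hm : 1 ≤ m)
    (hmb : ((n : ℝ) - 1) * Real.log (2 * r) / (((r : ℝ) - 1) * ((k : ℝ) - 1)) ≤ (m : ℝ)) :
    (({R : Finset (Fin n) | R.card = r ∧ HasGaps k m R}.ncard : ℝ)) ≤
      (1 / 2) * (n.choose r : ℝ) := by
  classical
  haveI : NeZero n := ⟨by omega⟩
  set q := (k-1)*m with hq
  set S : Set (Finset (Fin n)) := {R : Finset (Fin n) | R.card = r ∧ HasGaps k m R} with hS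
  set T : Finset (Fin n × Finset ℕ) :=
    (Finset.univ : Finset (Fin n)) ×ˢ (Finset.Icc 1 (n-1-q)).powersetCard (r-1) with hT
  have hex : ∀ R : Finset (Fin n), ∃ p : Fin n × Finset ℕ,
      R ∈ S → p ∈ T ∧ R = decode n k m r p.1 p.2 := by
    intro R
    by_cases hR : R ∈ S
    · obtain ⟨hcard, hg⟩ := hR
      obtain ⟨v, B, hBmem, hdec⟩ := exists_code hk hkr hrn hm hcard hg
      exact ⟨(v, B), fun _ => ⟨Finset.mem_product.2 ⟨Finset.mem_univ _, hBmem⟩, hdec⟩⟩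
    · exact ⟨(⟨0, by omega⟩, ∅), fun h => absurd h hR⟩
  choose φ hφ using hex
  have hcount : S.ncard ≤ (T : Set (Fin n × Finset ℕ)).ncard := by
    refine Set.ncard_le_ncard_of_injOn φ (fun R hR => (hφ R hR).1)
      (fun R1 h1 R2 h2 he => ?_) T.finite_toSet
    rw [(hφ R1 h1).2, (hφ R2 h2).2, he]
  have hTcard : (T : Set (Fin n × Finset ℕ)).ncard = n * ((n-1-q).choose (r-1)) := by
    rw [Set.ncard_coe_finset, hT, Finset.card_product, Finset.card_univ, Fintype.card_fin,
      Finset.card_powersetCard, Nat.card_Icc]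
    congr 2
    all_goals omega
  have h1 : (S.ncard : ℝ) ≤ ((n * ((n-1-q).choose (r-1)) : ℕ) : ℝ) := by
    exact_mod_cast hcount.trans (le_of_eq hTcard)
  calc (S.ncard : ℝ) ≤ ((n * ((n-1-q).choose (r-1)) : ℕ) : ℝ) := h1
    _ = (n : ℝ) * (((n - 1 - (k-1)*m).choose (r-1) : ℕ) : ℝ) := by push_cast [hq]; ring
    _ ≤ (1 / 2) * (n.choose r : ℝ) := analytic n r k m hk hkr hrn hm hmb
end

section
/- Let 2 ≤ k ≤ r, let m ≥ 1 be an integer dividing n, and identify Ω_n with {0, 1, ..., n−1} in clockwise cyclic order. Let H' be a cg r-graph on Ω_n such that no edge of H' has (k,m)-gaps and the sum of the elements of every edge of H' is divisible by m. Then H' contains no crossing k-path P_k^r. -/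
/-- `CycChain ℓ w` says that starting at `w 0` and moving clockwise around the cyclically
ordered set `Fin n` (clockwise = increasing residues), one encounters
`w 1, w 2, ..., w (ℓ-1)` in this order, i.e. `w 0 < w 1 < ... < w (ℓ-1) (< w 0)`
in the cyclic order. -/
def CycChain {n : ℕ} (ℓ : ℕ) (w : ℕ → Fin n) : Prop :=
  ∀ i j : ℕ, i < j → j < ℓ → w i - w 0 < w j - w 0

/-- `IsCycCrossPath r k H v` says that `v 0, v 1, ..., v (k+r-2)` are distinct vertices forming
an `r`-uniform crossing `k`-path in the convex geometric `r`-graph `H` on the cyclically ordered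
vertex set `Fin n`: the edges are `{v i, ..., v (i+r-1)}` for `0 ≤ i ≤ k-1`, and in the cyclic
order:
(i) `v 0 < v 1 < ... < v (r-1)`;
(ii) for each `j < r-1`, `v j < v (j+r) < v (j+2r) < ... < v (j+1)`, the chain running over all
indices `j + i*r ≤ k+r-2`;
(iii) `v 0 < v (r-1) < v (2r-1) < ... < v (⌊(r+k-2)/r⌋*r - 1)`. -/
def IsCycCrossPath (r k : ℕ) {n : ℕ} (H : Finset (Finset (Fin n))) (v : ℕ → Fin n) : Prop :=
  (∀ i j : ℕ, i < k + r - 1 → j < k + r - 1 → v i = v j → i = j) ∧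
  (∀ i : ℕ, i < k → Finset.image v (Finset.Ico i (i + r)) ∈ H) ∧
  CycChain r v ∧
  (∀ j : ℕ, j + 1 < r →
    CycChain ((k + r - 2 - j) / r + 2)
      (fun i => if i = 0 then v j
                else if i ≤ (k + r - 2 - j) / r then v (j + i * r) else v (j + 1))) ∧
  CycChain ((k + r - 2) / r + 1) (fun i => if i = 0 then v 0 else v (i * r - 1))

/-- `exCycP n r k` is the maximum number of edges in an `n`-vertex convex geometric `r`-graph
containing no crossing `k`-path `P_k^r`. -/
noncomputable def exCycP (n r k : ℕ) : ℕ :=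
  sSup {m | ∃ H : Finset (Finset (Fin n)),
    (∀ e ∈ H, e.card = r) ∧ (¬ ∃ v : ℕ → Fin n, IsCycCrossPath r k H v) ∧ H.card = m}

/-! The first edge `{v 0, …, v (r-1)}` of a crossing path already has `(k,m)`-gaps. Condition (i)
makes `v (i+1)` the clockwise successor of `v i` in that edge, and condition (ii) puts `v (i+r)`
strictly between them for `i ≤ k-2`. The edges `{v i, …, v (i+r-1)}` and `{v (i+1), …, v (i+r)}`
have sums that differ by `v (i+r) - v i`, so `v (i+r) ≡ v i (mod m)`; as `m ∣ n` this congruence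
survives the wrap-around, and the gap from `v i` to `v (i+1)` contains at least `m` vertices. -/

namespace Fin

variable {n : ℕ}

theorem val_sub_eq_of_sub_le_sub {a b c : Fin n} (h : a - c ≤ b - c) :
    ((b - a : Fin n) : ℕ) = (b - c : Fin n) - (a - c : Fin n) := by
  have : NeZero n := NeZero.of_pos c.pos
  rw [← sub_sub_sub_cancel_right b a c]
  exact Fin.coe_sub_iff_le.2 h

theorem val_sub_eq_of_sub_lt_sub {a b c : Fin n} (h : b - c < a - c) :
    ((b - a : Fin n) : ℕ) = n + (b - c : Fin n) - (a - c : Fin n) := by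
  have : NeZero n := NeZero.of_pos c.pos
  rw [← sub_sub_sub_cancel_right b a c]
  exact Fin.coe_sub_iff_lt.2 h

theorem natCast_val_sub {m : ℕ} (hmn : m ∣ n) (a b : Fin n) :
    (((b - a : Fin n) : ℕ) : ZMod m) = ((b : ℕ) : ZMod m) - ((a : ℕ) : ZMod m) := by
  have hmod : (((n - a + b) % n : ℕ) : ZMod m) = ((n - a + b : ℕ) : ZMod m) :=
    (ZMod.natCast_eq_natCast_iff' _ _ m).2 (Nat.mod_mod_of_dvd _ hmn)
  have hn : ((n : ℕ) : ZMod m) = 0 := (ZMod.natCast_eq_zero_iff n m).2 hmn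
  rw [Fin.val_sub, hmod, Nat.cast_add, Nat.cast_sub a.isLt.le, hn]
  ring

end Fin

theorem Finset.sum_Ico_succ_sub_sum_Ico {G : Type*} [AddCommGroup G] (f : ℕ → G) (i r : ℕ) :
    ∑ t ∈ Finset.Ico (i + 1) (i + 1 + r), f t - ∑ t ∈ Finset.Ico i (i + r), f t =
      f (i + r) - f i := by
  simp only [Finset.sum_Ico_eq_sum_range, Nat.add_sub_cancel_left, ← Finset.sum_sub_distrib]
  simpa only [add_assoc, add_comm 1, add_zero] using Finset.sum_range_sub (fun t => f (i + t)) r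

namespace CycChain

variable {n ℓ : ℕ} {w : ℕ → Fin n}

theorem nextIn (hw : CycChain ℓ w) {i : ℕ} (hi : i + 1 < ℓ) :
    NextIn ((Finset.range ℓ).image w) (w i) (w (i + 1)) := by
  have hstep : w i - w 0 < w (i + 1) - w 0 := hw i (i + 1) (by omega) hi
  refine ⟨Finset.mem_image_of_mem w (Finset.mem_range.2 (by omega)),
    Finset.mem_image_of_mem w (Finset.mem_range.2 hi), fun h => hstep.ne (by rw [h]), ?_⟩
  rintro _ hx hne
  obtain ⟨j, hj, rfl⟩ := Finset.mem_image.1 hx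
  rw [Finset.mem_range] at hj
  have hji : j ≠ i := by rintro rfl; exact hne rfl
  rw [Fin.le_def, Fin.val_sub_eq_of_sub_le_sub hstep.le]
  rcases Nat.lt_or_gt_of_ne hji with hlt | hgt
  · rw [Fin.val_sub_eq_of_sub_lt_sub (hw j i hlt (by omega))]
    have := (w (i + 1) - w 0).isLt
    omega
  · have hle : w (i + 1) - w 0 ≤ w j - w 0 := by
      rcases (by omega : i + 1 = j ∨ i + 1 < j) with rfl | h
      · exact le_rfl
      · exact (hw (i + 1) j h hj).le
    rw [Fin.val_sub_eq_of_sub_le_sub (hstep.le.trans hle)]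
    rw [Fin.le_def] at hle
    omega

end CycChain

namespace IsCycCrossPath

variable {r k n : ℕ} {H : Finset (Finset (Fin n))} {v : ℕ → Fin n}

theorem sub_pos_and_lt (hP : IsCycCrossPath r k H v) {i : ℕ} (hir : i + 1 < r) (hik : i + 2 ≤ k) :
    0 < ((v (i + r) - v i : Fin n) : ℕ) ∧ v (i + r) - v i < v (i + 1) - v i := by
  have hq : 1 ≤ (k + r - 2 - i) / r := (Nat.one_le_div_iff (by omega)).2 (by omega)
  have hchain := hP.2.2.2.1 i hir
  have h01 : v i - v i < v (i + r) - v i := by simpa [hq] using hchain 0 1 one_pos (by omega)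
  have h1q : v (i + r) - v i < v (i + 1) - v i := by
    simpa [hq] using hchain 1 ((k + r - 2 - i) / r + 1) (by omega) (by omega)
  have hzero := Fin.coe_sub_iff_le.2 (le_refl (v i))
  rw [Fin.lt_def, hzero, Nat.sub_self] at h01
  exact ⟨h01, h1q⟩

theorem sum_edge {i : ℕ} (hP : IsCycCrossPath r k H v) (hik : i < k) {M : Type*}
    [AddCommMonoid M] (f : Fin n → M) :
    ∑ x ∈ (Finset.Ico i (i + r)).image v, f x = ∑ t ∈ Finset.Ico i (i + r), f (v t) := by
  refine Finset.sum_image fun a ha b hb hab => hP.1 a b ?_ ?_ hab <;>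
    simp only [Finset.coe_Ico, Set.mem_Ico] at ha hb <;> omega

theorem dvd_val_sub {m : ℕ} (hP : IsCycCrossPath r k H v) (hmn : m ∣ n)
    (hsum : ∀ e ∈ H, m ∣ ∑ x ∈ e, (x : ℕ)) {i : ℕ} (hik : i + 1 < k) :
    m ∣ ((v (i + r) - v i : Fin n) : ℕ) := by
  have hzero : ∀ j < k, ∑ t ∈ Finset.Ico j (j + r), ((v t : ℕ) : ZMod m) = 0 := fun j hj => by
    rw [← hP.sum_edge hj fun x : Fin n => ((x : ℕ) : ZMod m), ← Nat.cast_sum,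
      ZMod.natCast_eq_zero_iff]
    exact hsum _ (hP.2.1 j hj)
  rw [← ZMod.natCast_eq_zero_iff, Fin.natCast_val_sub hmn,
    ← Finset.sum_Ico_succ_sub_sum_Ico (fun t => ((v t : ℕ) : ZMod m)),
    hzero i (by omega), hzero (i + 1) hik, sub_zero]

theorem add_one_le_val_sub_succ {m : ℕ} (hP : IsCycCrossPath r k H v) (hmn : m ∣ n)
    (hsum : ∀ e ∈ H, m ∣ ∑ x ∈ e, (x : ℕ)) {i : ℕ} (hir : i + 1 < r) (hik : i + 2 ≤ k) :
    m + 1 ≤ ((v (i + 1) - v i : Fin n) : ℕ) := by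
  obtain ⟨hpos, hlt⟩ := hP.sub_pos_and_lt hir hik
  have := Nat.le_of_dvd hpos (hP.dvd_val_sub hmn hsum (by omega))
  rw [Fin.lt_def] at hlt
  omega

theorem hasGaps_first_edge {m : ℕ} (hP : IsCycCrossPath r k H v) (hkr : k ≤ r) (hmn : m ∣ n)
    (hsum : ∀ e ∈ H, m ∣ ∑ x ∈ e, (x : ℕ)) : HasGaps k m ((Finset.range r).image v) :=
  ⟨v, fun _ hi =>
    ⟨hP.2.2.1.nextIn (by omega), hP.add_one_le_val_sub_succ hmn hsum (by omega) (by omega)⟩⟩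

end IsCycCrossPath

theorem stmt12_general (n r k m : ℕ) (hk : 2 ≤ k) (hkr : k ≤ r) (hmn : m ∣ n)
    (H' : Finset (Finset (Fin n)))
    (hH : ∀ e ∈ H', e.card = r ∧ ¬ HasGaps k m e ∧ m ∣ ∑ x ∈ e, (x : ℕ)) :
    ¬ ∃ v : ℕ → Fin n, IsCycCrossPath r k H' v := by
  rintro ⟨v, hP⟩
  have hfirst : (Finset.range r).image v ∈ H' := by
    simpa only [zero_add, ← Finset.range_eq_Ico] using hP.2.1 0 (by omega)
  exact (hH _ hfirst).2.1 (hP.hasGaps_first_edge hkr hmn fun e he => (hH e he).2.2)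

/-- Let `2 ≤ k ≤ r`, let `m ≥ 1` divide `n`, and let `H'` be a cg `r`-graph
on `Fin n = {0, 1, ..., n−1}` such that no edge of `H'` has `(k,m)`-gaps and the sum of the
elements of every edge is divisible by `m`. Then `H'` contains no crossing `k`-path. -/
theorem stmt12 (n r k m : ℕ) (hk : 2 ≤ k) (hkr : k ≤ r) (hm : 1 ≤ m) (hmn : m ∣ n)
    (H' : Finset (Finset (Fin n)))
    (hH : ∀ e ∈ H', e.card = r ∧ ¬ HasGaps k m e ∧ m ∣ ∑ x ∈ e, (x : ℕ)) :
    ¬ ∃ v : ℕ → Fin n, IsCycCrossPath r k H' v :=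
  stmt12_general n r k m hk hkr hmn H' hH
end

section
/- For all n > r ≥ 2, ex_↻(n, P_2^r) ≤ (1/2) · C(n, r−1). -/
namespace Stmt14

variable {n : ℕ}

open Fin.NatCast

/-- clockwise distance from `x` to `y` -/
def dd (x y : Fin n) : ℕ := (y - x).val

lemma dd_lt [NeZero n] (x y : Fin n) : dd x y < n := (y - x).isLt

lemma dd_eq_zero_iff [NeZero n] {x y : Fin n} : dd x y = 0 ↔ x = y := by
  unfold dd
  constructor
  · intro h
    have : y - x = 0 := Fin.ext (by simpa using h)
    have := sub_eq_zero.mp this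
    exact this.symm
  · rintro rfl; simp [sub_self]

lemma dd_self [NeZero n] (x : Fin n) : dd x x = 0 := dd_eq_zero_iff.mpr rfl

lemma dd_pos [NeZero n] {x y : Fin n} (h : x ≠ y) : 0 < dd x y :=
  Nat.pos_of_ne_zero (fun h0 => h (dd_eq_zero_iff.mp h0))

lemma dd_inj [NeZero n] {x y z : Fin n} (h : dd x y = dd x z) : y = z := by
  have : y - x = z - x := Fin.ext h
  exact sub_left_injective this

lemma dd_coc [NeZero n] (x y z : Fin n) :
    dd x y + dd y z = dd x z ∨ dd x y + dd y z = dd x z + n := by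
  have h : ((y - x) + (z - y)).val = ((y - x).val + (z - y).val) % n := by
    rw [Fin.add_def]
  have h2 : (y - x) + (z - y) = z - x := by
    rw [add_comm]; exact sub_add_sub_cancel z y x
  rw [h2] at h
  have b1 : dd x y < n := dd_lt x y
  have b2 : dd y z < n := dd_lt y z
  have b3 : dd x z < n := dd_lt x z
  unfold dd at *
  rcases Nat.lt_or_ge ((y - x).val + (z - y).val) n with hlt | hge
  · left; rw [Nat.mod_eq_of_lt hlt] at h; omega
  · right
    rw [Nat.mod_eq_sub_mod hge, Nat.mod_eq_of_lt (by omega)] at h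
    omega

lemma dd_total [NeZero n] {x y : Fin n} (hxy : x ≠ y) : dd x y + dd y x = n := by
  rcases dd_coc x y x with h | h
  · rw [dd_self] at h
    exact absurd (dd_eq_zero_iff.mp (by omega)) hxy
  · rw [dd_self] at h; omega

lemma add_dd [NeZero n] (x z : Fin n) : x + ((dd x z : ℕ) : Fin n) = z := by
  unfold dd
  rw [Fin.cast_val_eq_self, add_comm, sub_add_cancel]

/-- `gapb e a` : distance from `a` to the next element of `e` (when `e.erase a` nonempty). -/
def gapb (e : Finset (Fin n)) (a : Fin n) : ℕ :=
  (insert n ((e.erase a).image (dd a))).min' ⟨n, Finset.mem_insert_self _ _⟩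

lemma gapb_le {e : Finset (Fin n)} {a x : Fin n} (hx : x ∈ e.erase a) : gapb e a ≤ dd a x :=
  Finset.min'_le _ _ (Finset.mem_insert_of_mem (Finset.mem_image_of_mem _ hx))

lemma gapb_eq_min [NeZero n] {e : Finset (Fin n)} {a b : Fin n} (hb : b ∈ e.erase a)
    (hmin : ∀ x ∈ e.erase a, dd a b ≤ dd a x) : gapb e a = dd a b := by
  refine le_antisymm (gapb_le hb) (Finset.le_min' _ _ _ ?_)
  intro y hy
  rcases Finset.mem_insert.mp hy with h | h
  · subst h; exact le_of_lt (dd_lt a b)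
  · obtain ⟨x, hx, rfl⟩ := Finset.mem_image.mp h
    exact hmin x hx

lemma gapb_gt [NeZero n] {e : Finset (Fin n)} {a : Fin n} {c : ℕ} (hc : c < n)
    (h : ∀ x ∈ e.erase a, c < dd a x) : c < gapb e a := by
  have hmem := Finset.min'_mem (insert n ((e.erase a).image (dd a)))
    ⟨n, Finset.mem_insert_self _ _⟩
  rcases Finset.mem_insert.mp hmem with hh | hh
  · rw [gapb, hh]; exact hc
  · obtain ⟨x, hx, hxe⟩ := Finset.mem_image.mp hh
    rw [gapb, ← hxe]; exact h x hx

lemma path_lemma [NeZero n] {r : ℕ} (hr : 2 ≤ r) (H : Finset (Finset (Fin n)))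
    (f : Finset (Fin n)) (x y : Fin n) (hf : f.card = r - 1)
    (hx : x ∉ f) (hy : y ∉ f) (hxy : x ≠ y)
    (hHx : insert x f ∈ H) (hHy : insert y f ∈ H)
    (harc : ∀ z ∈ f, dd x y < dd x z) :
    ∃ v : ℕ → Fin n, IsCycCrossPath r 2 H v := by
  classical
  set l : List ℕ := (f.image (dd x)).sort (· ≤ ·) with hl
  have hinjdd : Function.Injective (dd x) := fun a b h => dd_inj h
  have hlen : l.length = r - 1 := by
    rw [hl, Finset.length_sort, Finset.card_image_of_injective _ hinjdd, hf]
  set v : ℕ → Fin n :=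
    fun i => if i = 0 then x else if i < r then x + ((l.getD (i-1) 0 : ℕ) : Fin n) else y
    with hv
  have hv0 : v 0 = x := by simp [hv]
  have hvr : v r = y := by
    have h1 : r ≠ 0 := by omega
    have h2 : ¬ (r < r) := lt_irrefl r
    simp [hv, h1, h2]
  have hvmid : ∀ i, 1 ≤ i → i < r → v i ∈ f ∧ dd x (v i) = l.getD (i-1) 0 := by
    intro i h1 h2
    have hi : i - 1 < l.length := by omega
    have hgl : l.getD (i-1) 0 = l[i-1] := List.getD_eq_getElem l 0 hi
    have hmeml : l.getD (i-1) 0 ∈ l := by rw [hgl]; exact List.getElem_mem hi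
    have hmemim : l.getD (i-1) 0 ∈ f.image (dd x) := (Finset.mem_sort _).mp hmeml
    obtain ⟨z, hz, hzv⟩ := Finset.mem_image.mp hmemim
    have hvi : v i = z := by
      show (if i = 0 then x else if i < r then x + ((l.getD (i-1) 0 : ℕ) : Fin n) else y) = z
      rw [if_neg (by omega), if_pos h2, ← hzv, add_dd]
    rw [hvi]
    exact ⟨hz, hzv ▸ rfl⟩
  have hsort : List.Pairwise (· < ·) l := (f.image (dd x)).sortedLT_sort.pairwise
  have hmono : ∀ i j, i < j → j < l.length → l.getD i 0 < l.getD j 0 := by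
    intro i j hij hj
    rw [List.getD_eq_getElem l 0 (lt_trans hij hj), List.getD_eq_getElem l 0 hj]
    exact List.pairwise_iff_get.mp hsort ⟨i, lt_trans hij hj⟩ ⟨j, hj⟩ hij
  have hDy : 0 < dd x y := dd_pos hxy
  have hmid_gt : ∀ i, 1 ≤ i → i < r → dd x y < dd x (v i) := by
    intro i h1 h2
    exact harc _ (hvmid i h1 h2).1
  have hmid_pos : ∀ i, 1 ≤ i → i < r → 0 < dd x (v i) := by
    intro i h1 h2; exact lt_trans hDy (hmid_gt i h1 h2)
  have hmid_mono : ∀ i j, 1 ≤ i → i < j → j < r → dd x (v i) < dd x (v j) := by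
    intro i j h1 hij hj
    rw [(hvmid i h1 (by omega)).2, (hvmid j (by omega) hj).2]
    exact hmono (i-1) (j-1) (by omega) (by omega)
  have hne : ∀ i j, i < j → j < r + 1 → v i ≠ v j := by
    intro i j hij hj hvij
    by_cases hi0 : i = 0
    · subst hi0
      rw [hv0] at hvij
      by_cases hjr : j = r
      · subst hjr; rw [hvr] at hvij; exact hxy hvij
      · exact hx (hvij ▸ (hvmid j (by omega) (by omega)).1)
    · have hi1 : 1 ≤ i := by omega
      by_cases hjr : j = r
      · subst hjr; rw [hvr] at hvij
        exact hy (hvij ▸ (hvmid i hi1 (by omega)).1)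
      · have := hmid_mono i j hi1 hij (by omega)
        rw [hvij] at this
        exact lt_irrefl _ this
  have hE0 : Finset.image v (Finset.Ico 0 r) = insert x f := by
    ext z
    simp only [Finset.mem_image, Finset.mem_Ico, Finset.mem_insert]
    constructor
    · rintro ⟨i, ⟨-, hir⟩, rfl⟩
      by_cases hi0 : i = 0
      · subst hi0; left; exact hv0
      · right; exact (hvmid i (by omega) hir).1
    · rintro (rfl | hzf)
      · exact ⟨0, ⟨le_refl 0, by omega⟩, hv0⟩
      · have hmim : dd x z ∈ f.image (dd x) := Finset.mem_image_of_mem _ hzf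
        have hml : dd x z ∈ l := (Finset.mem_sort _).mpr hmim
        obtain ⟨m, hm, hmv⟩ := List.mem_iff_getElem.mp hml
        refine ⟨m+1, ⟨by omega, by omega⟩, ?_⟩
        show (if m+1 = 0 then x else if m+1 < r then x + ((l.getD m 0 : ℕ) : Fin n) else y) = z
        rw [if_neg (by omega), if_pos (by omega), List.getD_eq_getElem l 0 hm, hmv, add_dd]
  have hE1 : Finset.image v (Finset.Ico 1 (1 + r)) = insert y f := by
    ext z
    simp only [Finset.mem_image, Finset.mem_Ico, Finset.mem_insert]
    constructor
    · rintro ⟨i, ⟨hi1, hir⟩, rfl⟩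
      by_cases hiR : i = r
      · subst hiR; left; exact hvr
      · right; exact (hvmid i hi1 (by omega)).1
    · rintro (rfl | hzf)
      · exact ⟨r, ⟨by omega, by omega⟩, hvr⟩
      · have hmim : dd x z ∈ f.image (dd x) := Finset.mem_image_of_mem _ hzf
        have hml : dd x z ∈ l := (Finset.mem_sort _).mpr hmim
        obtain ⟨m, hm, hmv⟩ := List.mem_iff_getElem.mp hml
        refine ⟨m+1, ⟨by omega, by omega⟩, ?_⟩
        show (if m+1 = 0 then x else if m+1 < r then x + ((l.getD m 0 : ℕ) : Fin n) else y) = z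
        rw [if_neg (by omega), if_pos (by omega), List.getD_eq_getElem l 0 hm, hmv, add_dd]
  have hlt : ∀ a b : Fin n, dd x a < dd x b → a - x < b - x := by
    intro a b h
    rw [Fin.lt_def]
    exact h
  refine ⟨v, ?_, ?_, ?_, ?_, ?_⟩
  · -- injectivity
    intro i j hi hj hvij
    by_contra hij
    rcases Nat.lt_or_ge i j with h | h
    · exact hne i j h (by omega) hvij
    · have : j < i := by omega
      exact hne j i this (by omega) hvij.symm
  · -- edges
    intro i hi
    interval_cases i
    · rw [Nat.zero_add, hE0]; exact hHx
    · rw [hE1]; exact hHy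
  · -- CycChain r v
    intro i j hij hj
    rw [hv0]
    apply hlt
    by_cases hi0 : i = 0
    · subst hi0; rw [hv0, dd_self]
      exact hmid_pos j (by omega) hj
    · exact hmid_mono i j (by omega) hij hj
  · -- condition (ii)
    intro j hj
    by_cases hj0 : j = 0
    · subst hj0
      have hdiv : (2 + r - 2 - 0) / r = 1 := by
        rw [show 2 + r - 2 - 0 = r by omega, Nat.div_self (by omega)]
      intro i i' hii' hi'
      rw [hdiv] at hi'
      simp only [hdiv]
      have e0 : (if (0:ℕ) = 0 then v 0 else if (0:ℕ) ≤ 1 then v (0 + 0 * r) else v (0+1)) = x := by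
        rw [if_pos rfl, hv0]
      have e1 : (if (1:ℕ) = 0 then v 0 else if (1:ℕ) ≤ 1 then v (0 + 1 * r) else v (0+1)) = y := by
        rw [if_neg one_ne_zero, if_pos le_rfl]
        simpa using hvr
      have e2 : (if (2:ℕ) = 0 then v 0 else if (2:ℕ) ≤ 1 then v (0 + 2 * r) else v (0+1)) = v 1 := by
        norm_num
      interval_cases i' <;> interval_cases i
      · rw [e0, e1]
        apply hlt
        rw [dd_self]; exact hDy
      · rw [e0, e2]
        apply hlt
        rw [dd_self]; exact hmid_pos 1 le_rfl (by omega)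
      · rw [e1, e2]
        apply hlt
        exact hmid_gt 1 le_rfl (by omega)
    · have hdiv : (2 + r - 2 - j) / r = 0 := Nat.div_eq_of_lt (by omega)
      intro i i' hii' hi'
      rw [hdiv] at hi'
      simp only [hdiv]
      have hi0 : i = 0 := by omega
      have hi1 : i' = 1 := by omega
      subst hi0; subst hi1
      have e0 : (if (0:ℕ) = 0 then v j else if (0:ℕ) ≤ 0 then v (j + 0 * r) else v (j+1)) = v j := by
        rw [if_pos rfl]
      have e1 : (if (1:ℕ) = 0 then v j else if (1:ℕ) ≤ 0 then v (j + 1 * r) else v (j+1)) = v (j+1) := by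
        norm_num
      rw [e0, e1, Fin.lt_def]
      have : v j ≠ v (j+1) := hne j (j+1) (by omega) (by omega)
      have h1 : dd (v j) (v j) = 0 := dd_self _
      have h2 : 0 < dd (v j) (v (j+1)) := dd_pos this
      show dd (v j) (v j) < dd (v j) (v (j+1))
      omega
  · -- condition (iii)
    have hdiv : (2 + r - 2) / r = 1 := by
      rw [show 2 + r - 2 = r by omega, Nat.div_self (by omega)]
    intro i i' hii' hi'
    rw [hdiv] at hi'
    have hi0 : i = 0 := by omega
    have hi1 : i' = 1 := by omega
    subst hi0; subst hi1
    have e0 : ((fun i => if i = 0 then v 0 else v (i * r - 1)) 0) = x := by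
      norm_num [hv0]
    have e1 : ((fun i => if i = 0 then v 0 else v (i * r - 1)) 1) = v (r-1) := by
      norm_num
    rw [e0, e1]
    apply hlt
    rw [dd_self]
    exact hmid_pos (r-1) (by omega) (by omega)

lemma private_a [NeZero n] {r : ℕ} (hr : 2 ≤ r) {H : Finset (Finset (Fin n))}
    (hcard : ∀ e ∈ H, e.card = r) (hfree : ¬ ∃ v : ℕ → Fin n, IsCycCrossPath r 2 H v)
    {e : Finset (Fin n)} (heH : e ∈ H) {a : Fin n} (hae : a ∈ e)
    {b : Fin n} (hb : b ∈ e.erase a) (hbmin : ∀ x ∈ e.erase a, dd a b ≤ dd a x)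
    (hmax : ∀ e' ∈ H, ∀ x ∈ e', gapb e' x ≤ gapb e a) :
    ∀ e' ∈ H, e.erase a ⊆ e' → e' = e := by
  intro e' hE' hsub
  by_contra hne
  set f := e.erase a with hfdef
  have hfcard : f.card = r - 1 := by rw [hfdef, Finset.card_erase_of_mem hae, hcard e heH]
  have hcard' : e'.card = r := hcard e' hE'
  have hsd : (e' \ f).card = 1 := by
    rw [Finset.card_sdiff_of_subset hsub, hcard', hfcard]; omega
  obtain ⟨w, hw⟩ := Finset.card_eq_one.mp hsd
  have he'w : e' = insert w f := by
    have h1 : (e' \ f) ∪ f = e' := Finset.sdiff_union_of_subset hsub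
    rw [hw] at h1
    rw [← h1]; ext z; simp [or_comm]
  have hwf : w ∉ f := by
    have : w ∈ e' \ f := by rw [hw]; exact Finset.mem_singleton_self w
    exact (Finset.mem_sdiff.mp this).2
  have haf : a ∉ f := Finset.notMem_erase a e
  have hwa : w ≠ a := by
    rintro rfl
    apply hne
    rw [he'w, hfdef, Finset.insert_erase hae]
  have hEins : insert a f ∈ H := by rw [hfdef, Finset.insert_erase hae]; exact heH
  have hE'ins : insert w f ∈ H := by rw [← he'w]; exact hE'
  by_cases hA : ∀ z ∈ f, dd a w < dd a z
  · exact hfree (path_lemma hr H f a w hfcard haf hwf (Ne.symm hwa) hEins hE'ins hA)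
  by_cases hB : ∀ z ∈ f, dd w a < dd w z
  · exact hfree (path_lemma hr H f w a hfcard hwf haf hwa hE'ins hEins hB)
  push_neg at hA hB
  obtain ⟨z₀, hz₀f, hz₀⟩ := hA
  obtain ⟨z₁, hz₁f, hz₁⟩ := hB
  have hz₀w : z₀ ≠ w := fun h => hwf (h ▸ hz₀f)
  have hz₁w : z₁ ≠ w := fun h => hwf (h ▸ hz₁f)
  have hz₁a : z₁ ≠ a := fun h => haf (h ▸ hz₁f)
  have hz₀lt : dd a z₀ < dd a w := lt_of_le_of_ne hz₀ (fun h => hz₀w (dd_inj h))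
  have hz₁lt : dd w z₁ < dd w a := lt_of_le_of_ne hz₁ (fun h => hz₁a (dd_inj h))
  have hwa_tot : dd a w + dd w a = n := dd_total (Ne.symm hwa)
  have ht_gt_b : dd a b < dd a w := lt_of_le_of_lt (hbmin z₀ hz₀f) hz₀lt
  have ht_lt_z₁ : dd a w < dd a z₁ := by
    rcases dd_coc a w z₁ with h | h
    · have h0 : 0 < dd w z₁ := dd_pos (Ne.symm hz₁w)
      omega
    · have := dd_lt a z₁
      omega
  obtain ⟨p, hpf, hpmax⟩ := f.exists_max_image (dd a) ⟨z₀, hz₀f⟩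
  have hpa : p ≠ a := fun h => haf (h ▸ hpf)
  have ht_lt_p : dd a w < dd a p := lt_of_lt_of_le ht_lt_z₁ (hpmax z₁ hz₁f)
  have hkey : ∀ x ∈ e'.erase p, dd a b < dd p x := by
    intro x hxE
    have hxp : x ≠ p := Finset.ne_of_mem_erase hxE
    have hxe' : x ∈ e' := Finset.mem_of_mem_erase hxE
    have hapn : dd a p < n := dd_lt a p
    rw [he'w] at hxe'
    rcases Finset.mem_insert.mp hxe' with rfl | hxf
    · rcases dd_coc a p x with h | h
      · omega
      · omega
    · have hxap : dd a x < dd a p := lt_of_le_of_ne (hpmax x hxf) (fun h => hxp (dd_inj h))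
      have hbx : dd a b ≤ dd a x := hbmin x hxf
      rcases dd_coc a p x with h | h
      · omega
      · omega
  have hpe' : p ∈ e' := hsub hpf
  have hgt : dd a b < gapb e' p := gapb_gt (dd_lt a b) hkey
  have hle : gapb e' p ≤ gapb e a := hmax e' hE' p hpe'
  rw [gapb_eq_min hb hbmin] at hle
  omega

lemma private_b [NeZero n] {r : ℕ} (hr : 2 ≤ r) {H : Finset (Finset (Fin n))}
    (hcard : ∀ e ∈ H, e.card = r) (hfree : ¬ ∃ v : ℕ → Fin n, IsCycCrossPath r 2 H v)
    {e : Finset (Fin n)} (heH : e ∈ H) {a : Fin n} (hae : a ∈ e)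
    {b : Fin n} (hb : b ∈ e.erase a) (hbmin : ∀ x ∈ e.erase a, dd a b ≤ dd a x)
    (hmax : ∀ e' ∈ H, ∀ x ∈ e', gapb e' x ≤ gapb e a) :
    ∀ e' ∈ H, e.erase b ⊆ e' → e' = e := by
  intro e'' hE'' hsub
  by_contra hne
  have hba : b ≠ a := Finset.ne_of_mem_erase hb
  have hbe : b ∈ e := Finset.mem_of_mem_erase hb
  set f' := e.erase b with hf'def
  have haf' : a ∈ f' := Finset.mem_erase.mpr ⟨Ne.symm hba, hae⟩
  have hbf' : b ∉ f' := Finset.notMem_erase b e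
  have hfcard' : f'.card = r - 1 := by rw [hf'def, Finset.card_erase_of_mem hbe, hcard e heH]
  have hcard'' : e''.card = r := hcard e'' hE''
  have hsd : (e'' \ f').card = 1 := by
    rw [Finset.card_sdiff_of_subset hsub, hcard'', hfcard']; omega
  obtain ⟨w, hw⟩ := Finset.card_eq_one.mp hsd
  have he''w : e'' = insert w f' := by
    have h1 : (e'' \ f') ∪ f' = e'' := Finset.sdiff_union_of_subset hsub
    rw [hw] at h1
    rw [← h1]; ext z; simp [or_comm]
  have hwf' : w ∉ f' := by
    have : w ∈ e'' \ f' := by rw [hw]; exact Finset.mem_singleton_self w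
    exact (Finset.mem_sdiff.mp this).2
  have hwb : w ≠ b := by
    rintro rfl
    apply hne
    rw [he''w, hf'def, Finset.insert_erase hbe]
  have hwa : w ≠ a := fun h => hwf' (h ▸ haf')
  have hEins : insert b f' ∈ H := by rw [hf'def, Finset.insert_erase hbe]; exact heH
  have hE''ins : insert w f' ∈ H := by rw [← he''w]; exact hE''
  by_cases hB : ∀ z ∈ f', dd w b < dd w z
  · exact hfree (path_lemma hr H f' w b hfcard' hwf' hbf' hwb hE''ins hEins hB)
  push_neg at hB
  obtain ⟨z₁, hz₁f', hz₁⟩ := hB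
  have hz₁b : z₁ ≠ b := fun h => hbf' (h ▸ hz₁f')
  have hz₁lt : dd w z₁ < dd w b := lt_of_le_of_ne hz₁ (fun h => hz₁b (dd_inj h))
  have htb : dd a b < dd a w := by
    by_contra hle
    push_neg at hle
    have htne : dd a w ≠ dd a b := fun h => hwb (dd_inj h)
    have ht0 : 0 < dd a w := dd_pos (Ne.symm hwa)
    have htlt : dd a w < dd a b := lt_of_le_of_ne hle htne
    have habn : dd a b < n := dd_lt a b
    have hwbv : dd a w + dd w b = dd a b := by
      rcases dd_coc a w b with h | h
      · exact h
      · have := dd_lt w b; omega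
    have hwa_tot : dd a w + dd w a = n := dd_total (Ne.symm hwa)
    have hcontra : dd w b < dd w z₁ := by
      by_cases hz₁a : z₁ = a
      · subst hz₁a
        omega
      · have hz₁ea : z₁ ∈ e.erase a :=
          Finset.mem_erase.mpr ⟨hz₁a, Finset.mem_of_mem_erase hz₁f'⟩
        have hcz₁ : dd a b ≤ dd a z₁ := hbmin z₁ hz₁ea
        have hcz₁' : dd a b < dd a z₁ := lt_of_le_of_ne hcz₁ (fun h => hz₁b (dd_inj h).symm)
        rcases dd_coc a w z₁ with h | h
        · omega
        · have := dd_lt w z₁; omega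
    omega
  have hkey : ∀ x ∈ e''.erase a, dd a b < dd a x := by
    intro x hx
    have hxa : x ≠ a := Finset.ne_of_mem_erase hx
    have hxe'' : x ∈ e'' := Finset.mem_of_mem_erase hx
    rw [he''w] at hxe''
    rcases Finset.mem_insert.mp hxe'' with rfl | hxf'
    · exact htb
    · have hxb : x ≠ b := fun h => hbf' (h ▸ hxf')
      have hxea : x ∈ e.erase a :=
        Finset.mem_erase.mpr ⟨hxa, Finset.mem_of_mem_erase hxf'⟩
      exact lt_of_le_of_ne (hbmin x hxea) (fun h => hxb (dd_inj h).symm)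
  have hae'' : a ∈ e'' := hsub haf'
  have hgt : dd a b < gapb e'' a := gapb_gt (dd_lt a b) hkey
  have hle := hmax e'' hE'' a hae''
  rw [gapb_eq_min hb hbmin] at hle
  omega

def shadow (H : Finset (Finset (Fin n))) : Finset (Finset (Fin n)) :=
  H.biUnion (fun e => e.image (fun a => e.erase a))

lemma path_mono {r k : ℕ} {H₁ H₂ : Finset (Finset (Fin n))} (h : H₁ ⊆ H₂) {v : ℕ → Fin n}
    (hp : IsCycCrossPath r k H₁ v) : IsCycCrossPath r k H₂ v := by
  obtain ⟨h1, h2, h3, h4, h5⟩ := hp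
  exact ⟨h1, fun i hi => h (h2 i hi), h3, h4, h5⟩

lemma shadow_bound [NeZero n] {r : ℕ} (hr : 2 ≤ r) :
    ∀ H : Finset (Finset (Fin n)), (∀ e ∈ H, e.card = r) →
      (¬ ∃ v : ℕ → Fin n, IsCycCrossPath r 2 H v) → 2 * H.card ≤ (shadow H).card := by
  intro H
  induction H using Finset.strongInduction with
  | _ H ih =>
    intro hcard hfree
    rcases H.eq_empty_or_nonempty with rfl | hne
    · simp
    obtain ⟨e₀, he₀⟩ := hne
    have he₀ne : e₀.Nonempty := by
      rw [← Finset.card_pos, hcard e₀ he₀]; omega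
    obtain ⟨q, hqmem, hqmax⟩ := (H.sigma (fun e => e)).exists_max_image (fun q => gapb q.1 q.2)
        ⟨⟨e₀, he₀ne.choose⟩, Finset.mem_sigma.mpr ⟨he₀, he₀ne.choose_spec⟩⟩
    obtain ⟨heH, hae⟩ := Finset.mem_sigma.mp hqmem
    set e := q.1 with hedef
    set a := q.2 with hadef
    have hmax : ∀ e' ∈ H, ∀ x ∈ e', gapb e' x ≤ gapb e a := by
      intro e' hE' x hx
      exact hqmax ⟨e', x⟩ (Finset.mem_sigma.mpr ⟨hE', hx⟩)
    have hone : (e.erase a).Nonempty := by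
      rw [← Finset.card_pos, Finset.card_erase_of_mem hae, hcard e heH]; omega
    obtain ⟨b, hb, hbmin⟩ := (e.erase a).exists_min_image (dd a) hone
    have hpa := private_a hr hcard hfree heH hae hb hbmin hmax
    have hpb := private_b hr hcard hfree heH hae hb hbmin hmax
    set H' := H.erase e with hH'
    have hsubH : H' ⊆ H := Finset.erase_subset e H
    have hcard' : ∀ e' ∈ H', e'.card = r := fun e' h => hcard e' (hsubH h)
    have hfree' : ¬ ∃ v, IsCycCrossPath r 2 H' v := by
      rintro ⟨v, hv⟩; exact hfree ⟨v, path_mono hsubH hv⟩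
    have hIH := ih H' (Finset.erase_ssubset heH) hcard' hfree'
    have hSsub : shadow H' ⊆ shadow H :=
      Finset.biUnion_subset_biUnion_of_subset_left _ hsubH
    have hmemA : e.erase a ∈ shadow H :=
      Finset.mem_biUnion.mpr ⟨e, heH, Finset.mem_image_of_mem _ hae⟩
    have hbe : b ∈ e := Finset.mem_of_mem_erase hb
    have hba : b ≠ a := Finset.ne_of_mem_erase hb
    have hmemB : e.erase b ∈ shadow H :=
      Finset.mem_biUnion.mpr ⟨e, heH, Finset.mem_image_of_mem _ hbe⟩
    have hnotA : e.erase a ∉ shadow H' := by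
      intro hmem
      obtain ⟨e', hE', hx⟩ := Finset.mem_biUnion.mp hmem
      obtain ⟨x, hxe', hxeq⟩ := Finset.mem_image.mp hx
      have hsub2 : e.erase a ⊆ e' := by rw [← hxeq]; exact Finset.erase_subset x e'
      exact (Finset.ne_of_mem_erase hE') (hpa e' (hsubH hE') hsub2)
    have hnotB : e.erase b ∉ shadow H' := by
      intro hmem
      obtain ⟨e', hE', hx⟩ := Finset.mem_biUnion.mp hmem
      obtain ⟨x, hxe', hxeq⟩ := Finset.mem_image.mp hx
      have hsub2 : e.erase b ⊆ e' := by rw [← hxeq]; exact Finset.erase_subset x e'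
      exact (Finset.ne_of_mem_erase hE') (hpb e' (hsubH hE') hsub2)
    have hAB : e.erase a ≠ e.erase b := by
      intro h
      have h2 : a ∈ e.erase b := Finset.mem_erase.mpr ⟨Ne.symm hba, hae⟩
      rw [← h] at h2
      exact (Finset.notMem_erase a e) h2
    have hsubIns : insert (e.erase a) (insert (e.erase b) (shadow H')) ⊆ shadow H := by
      intro z hz
      rcases Finset.mem_insert.mp hz with rfl | hz
      · exact hmemA
      rcases Finset.mem_insert.mp hz with rfl | hz
      · exact hmemB
      · exact hSsub hz
    have hcount : (shadow H').card + 2 ≤ (shadow H).card := by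
      have h1 : (insert (e.erase a) (insert (e.erase b) (shadow H'))).card
          = (shadow H').card + 2 := by
        rw [Finset.card_insert_of_notMem, Finset.card_insert_of_notMem hnotB]
        · intro hmem
          rcases Finset.mem_insert.mp hmem with h | h
          · exact hAB h
          · exact hnotA h
      have h2 := Finset.card_le_card hsubIns
      omega
    have hcarde : H'.card + 1 = H.card := by
      rw [hH']; exact Finset.card_erase_add_one heH
    omega

lemma main_count [NeZero n] {r : ℕ} (hr : 2 ≤ r) (H : Finset (Finset (Fin n)))
    (hcard : ∀ e ∈ H, e.card = r) (hfree : ¬ ∃ v : ℕ → Fin n, IsCycCrossPath r 2 H v) :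
    2 * H.card ≤ n.choose (r - 1) := by
  have h := shadow_bound hr H hcard hfree
  have hsub : shadow H ⊆ (Finset.univ : Finset (Fin n)).powersetCard (r-1) := by
    intro z hz
    obtain ⟨e, heH, hz⟩ := Finset.mem_biUnion.mp hz
    obtain ⟨x, hxe, rfl⟩ := Finset.mem_image.mp hz
    exact Finset.mem_powersetCard.mpr ⟨Finset.subset_univ _,
      by rw [Finset.card_erase_of_mem hxe, hcard e heH]⟩
  have h2 := Finset.card_le_card hsub
  rw [Finset.card_powersetCard, Finset.card_univ, Fintype.card_fin] at h2
  omega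

end Stmt14

/-- For all `n > r ≥ 2`, `ex_↻(n, P_2^r) ≤ (1/2)·C(n, r−1)`. -/
theorem stmt14 (r n : ℕ) (hr : 2 ≤ r) (hn : r < n) :
    (exCycP n r 2 : ℝ) ≤ (1 / 2) * (n.choose (r - 1) : ℝ) := by
  haveI : NeZero n := ⟨by omega⟩
  have hK : exCycP n r 2 ≤ n.choose (r-1) / 2 := by
    rw [exCycP]
    apply csSup_le
    · refine ⟨0, ∅, by simp, ?_, by simp⟩
      rintro ⟨v, hv⟩
      have h0 := hv.2.1 0 (by norm_num)
      exact (Finset.notMem_empty _) h0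
    · rintro m ⟨H, hcard, hfree, rfl⟩
      have := Stmt14.main_count hr H hcard hfree
      omega
  have h1 : (exCycP n r 2 : ℝ) ≤ ((n.choose (r-1) / 2 : ℕ) : ℝ) := Nat.cast_le.mpr hK
  have h2 : ((n.choose (r-1) / 2 : ℕ) : ℝ) ≤ (n.choose (r-1) : ℝ) / 2 := Nat.cast_div_le
  linarith
end

section
/- Let r ≥ 3 and n > r + 2, and identify Ω_n with {1 < 2 < ... < n} in clockwise cyclic order. Let H be the cg r-graph whose edges are all r-element subsets {a_1 < a_2 < ... < a_r} (inequalities as integers) with 1 < a_1, a_r < n, and a_i = a_{i−1} + 1 for some 2 ≤ i ≤ r−1. Then H contains no crossing r-path P_r^r. Consequently, for every ε > 0 there is N such that for all n ≥ N, ex_↻(n, P_r^r) ≥ (1−ε)(r−2) · C(n, r−1). -/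
lemma modD {n X Y : ℕ} (hX : X < n) (hY : Y < n) :
    ((n - X) + Y) % n = if X ≤ Y then Y - X else (n - X) + Y := by
  split
  · have h1 : (n - X) + Y = (Y - X) + n := by omega
    rw [h1, Nat.add_mod_right]
    exact Nat.mod_eq_of_lt (by omega)
  · exact Nat.mod_eq_of_lt (by omega)


lemma part1 (r : ℕ) (hr : 3 ≤ r) (n : ℕ) (H : Finset (Finset (Fin n)))
    (hH : ∀ e : Finset (Fin n), e ∈ H ↔ (e.card = r ∧ (∀ c ∈ e, 1 ≤ (c : ℕ) ∧ (c : ℕ) < n - 1) ∧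
        ∃ a ∈ e, ∃ b ∈ e, (b : ℕ) = (a : ℕ) + 1 ∧
          (e.filter (fun c => c ≤ b)).card ≤ r - 1)) :
    ¬ ∃ v : ℕ → Fin n, IsCycCrossPath r r H v := by
  rintro ⟨v, hinj, hedge, hc1, hc2, -⟩
  have hn0 : 0 < n := (v 0).pos
  haveI : NeZero n := ⟨hn0.ne'⟩
  -- u i : the integer value of vertex i; x i : cyclic coordinate measured from v 0
  set u : ℕ → ℕ := fun i => ((v i : Fin n) : ℕ) with hu
  set x : ℕ → ℕ := fun i => ((v i - v 0 : Fin n) : ℕ) with hxdef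
  have hxlt : ∀ i, x i < n := fun i => (v i - v 0).isLt
  have hult : ∀ i, u i < n := fun i => (v i).isLt
  have hx0 : x 0 = 0 := by simp [hxdef]
  have hxformula : ∀ a b : ℕ, ((v b - v a : Fin n) : ℕ) = ((n - x a) + x b) % n := by
    intro a b
    have h : v b - v a = (v b - v 0) - (v a - v 0) := (sub_sub_sub_cancel_right _ _ _).symm
    rw [h, Fin.sub_def]
  have hmono : ∀ i j, i < j → j < r → x i < x j := by
    intro i j h1 h2
    exact Fin.lt_def.mp (hc1 i j h1 h2)
  have hxinj : ∀ a b, a < 2*r-1 → b < 2*r-1 → x a = x b → a = b := by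
    intro a b ha hb hxe
    refine hinj a b (by omega) (by omega) ?_
    have h2 : v a - v 0 = v b - v 0 := Fin.val_injective hxe
    rwa [sub_left_inj] at h2
  -- the interleaving conditions
  have hkey : ∀ j, j + 1 < r → x j < x (j + r) ∧ x (j + r) < x (j + 1) := by
    intro j hj
    have hdiv : (r + r - 2 - j) / r = 1 := Nat.div_eq_of_lt_le (by omega) (by omega)
    have hC := hc2 j hj
    rw [hdiv] at hC
    have h01 := hC 0 1 (by norm_num) (by norm_num)
    have h12 := hC 1 2 (by norm_num) (by norm_num)
    simp only [if_pos rfl, one_ne_zero, if_neg, if_true, le_refl, ite_true, ite_false,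
      Nat.one_le_iff_ne_zero, one_mul] at h01 h12
    norm_num at h01 h12
    have A := Fin.lt_def.mp h01
    have B := Fin.lt_def.mp h12
    simp only [Fin.val_zero] at A
    have e1 : ((v (j+r) - v j : Fin n) : ℕ) = if x j ≤ x (j+r) then x (j+r) - x j else (n - x j) + x (j+r) := by
      rw [hxformula]; exact modD (hxlt j) (hxlt (j+r))
    have e2 : ((v (j+1) - v j : Fin n) : ℕ) = if x j ≤ x (j+1) then x (j+1) - x j else (n - x j) + x (j+1) := by
      rw [hxformula]; exact modD (hxlt j) (hxlt (j+1))
    have hj1 : x j < x (j+1) := hmono j (j+1) (by omega) hj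
    rw [if_pos hj1.le] at e2
    rw [e1] at A B
    rw [e2] at B
    have b1 := hxlt j; have b2 := hxlt (j+r); have b3 := hxlt (j+1)
    split_ifs at A B with h <;> omega
  -- positions in the full interleaved cyclic order
  set p : ℕ → ℕ := fun a => if a < r then 2*a else 2*(a-r)+1 with hp
  have hplt : ∀ a, a < 2*r-1 → p a < 2*r-1 := by
    intro a ha; simp only [hp]; split <;> omega
  have hXLT : ∀ a b, a < 2*r-1 → b < 2*r-1 → p a < p b → x a < x b := by
    intro a b ha hb hab
    rcases lt_or_ge a r with h1 | h1 <;> rcases lt_or_ge b r with h2 | h2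
    · have hlt : a < b := by simp only [hp, if_pos h1, if_pos h2] at hab; omega
      exact hmono a b hlt h2
    · have hble : a ≤ b - r := by
        simp only [hp, if_pos h1, if_neg (not_lt.mpr h2)] at hab; omega
      have h3 : x (b - r) < x b := by
        have h4 := (hkey (b-r) (by omega)).1
        rwa [Nat.sub_add_cancel h2] at h4
      rcases eq_or_lt_of_le hble with h4 | h4
      · rwa [h4]
      · exact (hmono a (b-r) h4 (by omega)).trans h3
    · have hble : a - r + 1 ≤ b := by
        simp only [hp, if_neg (not_lt.mpr h1), if_pos h2] at hab; omega
      have h3 : x a < x (a - r + 1) := by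
        have h4 := (hkey (a-r) (by omega)).2
        rwa [Nat.sub_add_cancel h1] at h4
      rcases eq_or_lt_of_le hble with h4 | h4
      · rwa [← h4]
      · exact h3.trans (hmono _ b h4 h2)
    · have h4 : a < b := by
        simp only [hp, if_neg (not_lt.mpr h1), if_neg (not_lt.mpr h2)] at hab; omega
      have h3 : x a < x (a - r + 1) := by
        have h5 := (hkey (a-r) (by omega)).2
        rwa [Nat.sub_add_cancel h1] at h5
      have h5 : x (b - r) < x b := by
        have h6 := (hkey (b-r) (by omega)).1
        rwa [Nat.sub_add_cancel h2] at h6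
      rcases eq_or_lt_of_le (show a - r + 1 ≤ b - r by omega) with h6 | h6
      · rw [h6] at h3; exact h3.trans h5
      · exact h3.trans ((hmono _ _ h6 (by omega)).trans h5)
  have hsurj : ∀ q, q < 2*r-1 → ∃ w, w < 2*r-1 ∧ p w = q := by
    intro q hq
    rcases Nat.even_or_odd q with ⟨m, hm⟩ | ⟨m, hm⟩
    · exact ⟨m, by omega, by simp only [hp, if_pos (show m < r by omega)]; omega⟩
    · exact ⟨m + r, by omega, by simp only [hp, if_neg (show ¬ (m + r < r) by omega)]; omega⟩
  have hpinj : ∀ a b, a < 2*r-1 → b < 2*r-1 → p a = p b → a = b := by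
    intro a b ha hb hab
    simp only [hp] at hab; split_ifs at hab <;> omega
  -- the "in between" contradiction tool
  have hbetw : ∀ s t w : ℕ, u t = u s + 1 →
      ((x s < x w ∧ x w < x t) ∨ (x t < x s ∧ (x s < x w ∨ x w < x t))) → False := by
    intro s t w hut hcase
    have hvt : ((v t - v s : Fin n) : ℕ) = 1 := by
      have hn2 : 2 ≤ n := by have := hult t; omega
      have h1 : (n - ((v s : Fin n) : ℕ)) + ((v t : Fin n) : ℕ) = n + 1 := by
        have h2 := hult s; have h3 := hult t
        simp only [hu] at hut
        omega
      rw [Fin.sub_def]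
      simp only [h1, Nat.add_mod_left]
      exact Nat.mod_eq_of_lt (by omega)
    have hvt2 : ((v t - v s : Fin n) : ℕ) = if x s ≤ x t then x t - x s else (n - x s) + x t := by
      rw [hxformula]; exact modD (hxlt s) (hxlt t)
    rw [hvt] at hvt2
    have b1 := hxlt s; have b2 := hxlt t; have b3 := hxlt w
    split_ifs at hvt2 with h <;> omega
  -- pinning down the consecutive pair in each edge
  have hpair : ∀ i s t : ℕ, i < r → i ≤ s → s < i + r → i ≤ t → t < i + r → u t = u s + 1 →
      s = i + r - 1 ∧ t = i := by
    intro i s t hi hs1 hs2 ht1 ht2 hut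
    have hs' : s < 2*r-1 := by omega
    have ht' : t < 2*r-1 := by omega
    have hst : s ≠ t := by intro h; rw [h] at hut; omega
    have hpst : p s ≠ p t := fun h => hst (hpinj s t hs' ht' h)
    rcases lt_or_gt_of_ne hpst with hlt | hgt
    · by_cases hone : p t = p s + 1
      · simp only [hp] at hone
        split_ifs at hone <;> omega
      · obtain ⟨w, hw1, hw2⟩ := hsurj (p s + 1) (by have := hplt t ht'; omega)
        exact (hbetw s t w hut (Or.inl ⟨hXLT s w hs' hw1 (by omega),
          hXLT w t hw1 ht' (by omega)⟩)).elim
    · by_cases hq : p t = 0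
      · by_cases h0 : p s = 2*r-2
        · simp only [hp] at hq h0
          split_ifs at hq h0 <;> omega
        · have hps : p s < 2*r-2 := lt_of_le_of_ne (by have := hplt s hs'; omega) h0
          obtain ⟨w, hw1, hw2⟩ := hsurj (p s + 1) (by omega)
          exact (hbetw s t w hut (Or.inr ⟨hXLT t s ht' hs' hgt,
            Or.inl (hXLT s w hs' hw1 (by omega))⟩)).elim
      · obtain ⟨w, hw1, hw2⟩ := hsurj (p t - 1) (by have := hplt t ht'; omega)
        exact (hbetw s t w hut (Or.inr ⟨hXLT t s ht' hs' hgt,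
          Or.inr (hXLT w t hw1 ht' (by omega))⟩)).elim
  -- extract the structure of each edge
  have hREL : ∀ i, i < r → u i = u (i + r - 1) + 1 ∧
      ((Finset.image v (Finset.Ico i (i + r))).filter (fun c => c ≤ v i)).card ≤ r - 1 := by
    intro i hi
    have hEH := hedge i hi
    rw [hH] at hEH
    obtain ⟨hcard, hbounds, a, ha, b, hb, hba, hrank⟩ := hEH
    obtain ⟨s, hs, hvs⟩ := Finset.mem_image.mp ha
    obtain ⟨t, ht, hvt⟩ := Finset.mem_image.mp hb
    rw [Finset.mem_Ico] at hs ht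
    have hut : u t = u s + 1 := by
      simp only [hu]; rw [hvs, hvt]; exact hba
    obtain ⟨hse, hte⟩ := hpair i s t hi hs.1 hs.2 ht.1 ht.2 hut
    rw [hse, hte] at hut
    refine ⟨hut, ?_⟩
    rw [hte] at hvt
    rw [← hvt] at hrank
    exact hrank
  -- the global maximum
  obtain ⟨M, hM, hMmax⟩ := Finset.exists_max_image (Finset.range (2*r-1)) u
    ⟨0, Finset.mem_range.mpr (by omega)⟩
  rw [Finset.mem_range] at hM
  have hMmax' : ∀ w, w < 2*r-1 → u w ≤ u M := fun w hw => hMmax w (Finset.mem_range.mpr hw)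
  have hMle : M ≤ r - 2 := by
    by_contra hc
    push_neg at hc
    rcases lt_or_ge M r with h1 | h1
    · have hM1 : M = r - 1 := by omega
      have h2 := (hREL 0 (by omega)).1
      have h3 := hMmax' 0 (by omega)
      rw [Nat.zero_add, ← hM1] at h2
      omega
    · have h3 := (hREL (M - r + 1) (by omega)).1
      have h4 : M - r + 1 + r - 1 = M := by omega
      rw [h4] at h3
      have h5 := hMmax' (M - r + 1) (by omega)
      omega
  -- the final contradiction: the successor of the global maximum is the b of edge M,
  -- but it is the maximum of that edge
  have hEM := hedge M (by omega)
  rw [hH] at hEM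
  obtain ⟨hcard, -, -⟩ := hEM
  have hfil : (Finset.image v (Finset.Ico M (M + r))).filter (fun c => c ≤ v M)
      = Finset.image v (Finset.Ico M (M + r)) := by
    refine Finset.filter_eq_self.mpr ?_
    intro c hc
    obtain ⟨w, hw, hvw⟩ := Finset.mem_image.mp hc
    rw [Finset.mem_Ico] at hw
    rw [← hvw]
    exact Fin.le_def.mpr (hMmax' w (by omega))
  have hrank := (hREL M (by omega)).2
  rw [hfil, hcard] at hrank
  omega

lemma choose_shift (k : ℕ) : ∀ d n : ℕ,
    Nat.choose n (k+1) ≤ Nat.choose (n - d) (k+1) + d * Nat.choose (n-1) k := by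
  intro d
  induction d with
  | zero => intro n; simp
  | succ d ih =>
    intro n
    have h1 := ih n
    have h2 : Nat.choose (n - d) (k+1) ≤ Nat.choose (n - (d+1)) (k+1) + Nat.choose (n-1) k := by
      rcases Nat.eq_zero_or_pos (n - d) with h | h
      · rw [h]
        simp
      · obtain ⟨m, hm⟩ : ∃ m, n - d = m + 1 := ⟨n - d - 1, by omega⟩
        rw [hm]
        rw [Nat.choose_succ_succ]
        simp only [Nat.succ_eq_add_one]
        have h3 : n - (d+1) = m := by omega
        rw [h3]
        have h4 : Nat.choose m k ≤ Nat.choose (n-1) k := Nat.choose_le_choose k (by omega)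
        omega
    have h5 : (d+1) * Nat.choose (n-1) k = d * Nat.choose (n-1) k + Nat.choose (n-1) k :=
      Nat.succ_mul _ _
    omega


lemma choose_id (r n : ℕ) (hr : 2 ≤ r) (hn : 1 ≤ n) :
    n * Nat.choose (n-1) (r-2) = Nat.choose n (r-1) * (r-1) := by
  have h := Nat.add_one_mul_choose_eq (n-1) (r-2)
  have h1 : n - 1 + 1 = n := by omega
  have h2 : r - 2 + 1 = r-1 := by omega
  rwa [h1, h2] at h

open Fin.NatCast in
lemma Hcard (r n : ℕ) (hr : 3 ≤ r) (hn : 2*r + 5 ≤ n) :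
    ∃ H : Finset (Finset (Fin n)),
      (∀ e : Finset (Fin n), e ∈ H ↔ (e.card = r ∧ (∀ c ∈ e, 1 ≤ (c : ℕ) ∧ (c : ℕ) < n - 1) ∧
        ∃ a ∈ e, ∃ b ∈ e, (b : ℕ) = (a : ℕ) + 1 ∧
          (e.filter (fun c => c ≤ b)).card ≤ r - 1)) ∧
      (n - 2*r).choose (r-1) * (r - 2) ≤ H.card := by
  classical
  haveI : NeZero n := ⟨by omega⟩
  set m := n - 2*r with hm
  set P : Finset (Fin n) → Prop := fun e => (e.card = r ∧ (∀ c ∈ e, 1 ≤ (c : ℕ) ∧ (c : ℕ) < n - 1) ∧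
        ∃ a ∈ e, ∃ b ∈ e, (b : ℕ) = (a : ℕ) + 1 ∧
          (e.filter (fun c => c ≤ b)).card ≤ r - 1) with hP
  refine ⟨Finset.univ.filter P, ?_, ?_⟩
  · intro e
    rw [Finset.mem_filter, hP]
    simp
  set f : Finset ℕ → ℕ → ℕ := fun T y => y + 2 * (T.filter (· < y)).card with hf
  have hgap : ∀ (T : Finset ℕ) (a b : ℕ), a ∈ T → b ∈ T → a < b → f T a + 3 ≤ f T b := by
    intro T a b haT hbT hab
    have hsub : insert a (T.filter (· < a)) ⊆ T.filter (· < b) := by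
      intro z hz
      rw [Finset.mem_insert] at hz
      rcases hz with rfl | hz
      · exact Finset.mem_filter.mpr ⟨haT, hab⟩
      · rw [Finset.mem_filter] at hz ⊢
        exact ⟨hz.1, hz.2.trans hab⟩
    have h0 : a ∉ T.filter (fun x => x < a) := fun h => lt_irrefl a (Finset.mem_filter.mp h).2
    have h1 : (T.filter (fun x => x < a)).card + 1 ≤ (T.filter (fun x => x < b)).card := by
      rw [← Finset.card_insert_of_notMem h0]
      exact Finset.card_le_card hsub
    simp only [hf]
    omega
  have hfinj : ∀ (T : Finset ℕ) (a b : ℕ), a ∈ T → b ∈ T → f T a = f T b → a = b := by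
    intro T a b haT hbT hfe
    rcases lt_trichotomy a b with h | h | h
    · have := hgap T a b haT hbT h; omega
    · exact h
    · have := hgap T b a hbT haT h; omega
  have hbnd : ∀ T : Finset ℕ, T ⊆ Finset.Icc 1 m → T.card = r - 1 →
      ∀ y ∈ T, 1 ≤ f T y ∧ f T y + 1 ≤ n - 3 := by
    intro T hTs hTc y hyT
    have h1 := hTs hyT
    rw [Finset.mem_Icc] at h1
    have h2 : (T.filter (· < y)).card ≤ r - 2 := by
      have hsub : T.filter (· < y) ⊆ T.erase y := by
        intro z hz
        rw [Finset.mem_filter] at hz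
        exact Finset.mem_erase.mpr ⟨by omega, hz.1⟩
      calc (T.filter (· < y)).card ≤ (T.erase y).card := Finset.card_le_card hsub
        _ = r - 1 - 1 := by rw [Finset.card_erase_of_mem hyT, hTc]
        _ ≤ r - 2 := by omega
    simp only [hf]
    omega
  have hnm : ∀ (T : Finset ℕ) (t : ℕ), t ∈ T → f T t + 1 ∉ T.image (f T) := by
    intro T t ht hmem
    obtain ⟨y, hy, hye⟩ := Finset.mem_image.mp hmem
    rcases lt_trichotomy y t with h | h | h
    · have := hgap T y t hy ht h; omega
    · subst h; omega
    · have := hgap T t y ht hy h; omega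
  have hupair : ∀ (T : Finset ℕ) (t : ℕ), t ∈ T → ∀ z,
      z ∈ insert (f T t + 1) (T.image (f T)) → z + 1 ∈ insert (f T t + 1) (T.image (f T)) →
      z = f T t := by
    intro T t ht z hz hz1
    rw [Finset.mem_insert] at hz hz1
    rcases hz with rfl | hz
    · rcases hz1 with h | h
      · omega
      · obtain ⟨y, hy, hye⟩ := Finset.mem_image.mp h
        rcases lt_trichotomy y t with h2 | h2 | h2
        · have := hgap T y t hy ht h2; omega
        · subst h2; omega
        · have := hgap T t y ht hy h2; omega
    · obtain ⟨y, hy, rfl⟩ := Finset.mem_image.mp hz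
      rcases hz1 with h | h
      · have h3 : y = t := hfinj T y t hy ht (by omega)
        rw [h3]
      · obtain ⟨y', hy', hye'⟩ := Finset.mem_image.mp h
        rcases lt_trichotomy y y' with h2 | h2 | h2
        · have := hgap T y y' hy hy' h2; omega
        · subst h2; omega
        · have := hgap T y' y hy' hy h2; omega
  have hgS : ∀ (T : Finset ℕ) (x : ℕ), x ∈ T →
      f T x - 2 * (((T.image (f T)).filter (· < f T x)).card) = x := by
    intro T x hx
    have heqf : (T.image (f T)).filter (· < f T x) = (T.filter (· < x)).image (f T) := by
      ext z
      simp only [Finset.mem_filter, Finset.mem_image]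
      constructor
      · rintro ⟨⟨y, hy, rfl⟩, hlt⟩
        refine ⟨y, ⟨hy, ?_⟩, rfl⟩
        by_contra hxy
        rcases eq_or_lt_of_le (not_lt.mp hxy) with h | h
        · subst h; omega
        · have := hgap T x y hx hy h; omega
      · rintro ⟨y, ⟨hy, hylt⟩, rfl⟩
        exact ⟨⟨y, hy, rfl⟩, by have := hgap T y x hy hx hylt; omega⟩
    rw [heqf, Finset.card_image_of_injOn (fun a ha b hb hab => hfinj T a b
      (Finset.mem_filter.mp (Finset.mem_coe.mp ha)).1
      (Finset.mem_filter.mp (Finset.mem_coe.mp hb)).1 hab)]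
    have hle : (T.filter (· < x)).card * 2 ≤ f T x - x + (f T x - f T x) := by
      simp only [hf]; omega
    simp only [hf]
    omega
  have hval : ∀ (a : ℕ), a < n → ((a : Fin n) : ℕ) = a := fun a ha => Fin.val_cast_of_lt ha
  set D := (Finset.powersetCard (r-1) (Finset.Icc 1 m)).sigma
    (fun T => T.filter (fun t => ∃ s ∈ T, t < s)) with hD
  have hDmem : ∀ (T : Finset ℕ) (t : ℕ), (⟨T, t⟩ : (_ : Finset ℕ) × ℕ) ∈ D →
      T ⊆ Finset.Icc 1 m ∧ T.card = r - 1 ∧ t ∈ T ∧ ∃ s ∈ T, t < s := by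
    intro T t hq
    rw [hD, Finset.mem_sigma] at hq
    obtain ⟨h1, h2⟩ := hq
    have h1' : T ∈ Finset.powersetCard (r-1) (Finset.Icc 1 m) := h1
    have h2' : t ∈ T.filter (fun t => ∃ s ∈ T, t < s) := h2
    rw [Finset.mem_powersetCard] at h1'
    rw [Finset.mem_filter] at h2'
    exact ⟨h1'.1, h1'.2, h2'.1, h2'.2⟩
  have hDcard : D.card = m.choose (r-1) * (r-2) := by
    rw [hD, Finset.card_sigma]
    have hconst : ∀ T ∈ Finset.powersetCard (r-1) (Finset.Icc 1 m),
        (T.filter (fun t => ∃ s ∈ T, t < s)).card = r - 2 := by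
      intro T hT
      rw [Finset.mem_powersetCard] at hT
      obtain ⟨hTs, hTc⟩ := hT
      have hne : T.Nonempty := Finset.card_pos.mp (by omega)
      have hmaxm := T.max'_mem hne
      have heq : T.filter (fun t => ∃ s ∈ T, t < s) = T.erase (T.max' hne) := by
        ext t
        simp only [Finset.mem_filter, Finset.mem_erase]
        constructor
        · rintro ⟨htT, s, hsT, hts⟩
          refine ⟨fun h => ?_, htT⟩
          have := Finset.le_max' T s hsT
          omega
        · rintro ⟨hne', htT⟩
          exact ⟨htT, T.max' hne, hmaxm, lt_of_le_of_ne (Finset.le_max' T t htT) hne'⟩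
      rw [heq, Finset.card_erase_of_mem hmaxm, hTc]
      omega
    rw [Finset.sum_congr rfl hconst, Finset.sum_const, Finset.card_powersetCard,
      smul_eq_mul, Nat.card_Icc]
    norm_num
  set Φ : (_ : Finset ℕ) × ℕ → Finset (Fin n) := fun q =>
    insert ((f q.1 q.2 + 1 : ℕ) : Fin n) (q.1.image (fun y => ((f q.1 y : ℕ) : Fin n))) with hΦ
  have hmaps : ∀ q ∈ D, Φ q ∈ Finset.univ.filter P := by
    rintro ⟨T, t⟩ hq
    obtain ⟨hTs, hTc, htT, s, hsT, hts⟩ := hDmem T t hq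
    have hb := hbnd T hTs hTc
    have hvimg : ∀ y ∈ T, ((((f T y : ℕ)) : Fin n) : ℕ) = f T y := by
      intro y hy; exact hval _ (by have := hb y hy; omega)
    have hvb : ((((f T t + 1 : ℕ)) : Fin n) : ℕ) = f T t + 1 :=
      hval _ (by have := hb t htT; omega)
    have hΦeq : Φ ⟨T, t⟩ =
        insert ((f T t + 1 : ℕ) : Fin n) (T.image (fun y => ((f T y : ℕ) : Fin n))) := by
      simp only [hΦ]
    have hnotmem : ((f T t + 1 : ℕ) : Fin n) ∉ T.image (fun y => ((f T y : ℕ) : Fin n)) := by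
      intro hmem
      obtain ⟨y, hy, hye⟩ := Finset.mem_image.mp hmem
      have he2 : f T y = f T t + 1 := by
        rw [← hvimg y hy, hye, hvb]
      rcases lt_trichotomy y t with h | h | h
      · have := hgap T y t hy htT h; omega
      · subst h; omega
      · have := hgap T t y htT hy h; omega
    have hcardimg : (T.image (fun y => ((f T y : ℕ) : Fin n))).card = T.card :=
      Finset.card_image_of_injOn (fun a ha b hb' he => hfinj T a b
        (Finset.mem_coe.mp ha) (Finset.mem_coe.mp hb')
        (by rw [← hvimg a (Finset.mem_coe.mp ha), ← hvimg b (Finset.mem_coe.mp hb'), he]))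
    have hcard : (Φ ⟨T, t⟩).card = r := by
      rw [hΦeq, Finset.card_insert_of_notMem hnotmem, hcardimg, hTc]
      omega
    rw [Finset.mem_filter, hP]
    refine ⟨Finset.mem_univ _, hcard, ?_, ?_⟩
    · intro c hc
      rw [hΦeq, Finset.mem_insert] at hc
      rcases hc with rfl | hc
      · rw [hvb]
        have := hb t htT
        omega
      · obtain ⟨y, hy, rfl⟩ := Finset.mem_image.mp hc
        rw [hvimg y hy]
        have := hb y hy
        omega
    · refine ⟨((f T t : ℕ) : Fin n), ?_, ((f T t + 1 : ℕ) : Fin n), ?_, ?_, ?_⟩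
      · rw [hΦeq]
        exact Finset.mem_insert_of_mem (Finset.mem_image_of_mem _ htT)
      · rw [hΦeq]
        exact Finset.mem_insert_self _ _
      · rw [hvb, hvimg t htT]
      · have hsubf : (Φ ⟨T,t⟩).filter (fun c => c ≤ ((f T t + 1 : ℕ) : Fin n)) ⊆
            insert ((f T t + 1 : ℕ) : Fin n)
              ((T.filter (· ≤ t)).image (fun y => ((f T y : ℕ) : Fin n))) := by
          intro c hc
          rw [Finset.mem_filter] at hc
          obtain ⟨hce, hcb⟩ := hc
          rw [hΦeq, Finset.mem_insert] at hce
          rcases hce with rfl | hce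
          · exact Finset.mem_insert_self _ _
          · obtain ⟨y, hy, rfl⟩ := Finset.mem_image.mp hce
            have hyt : y ≤ t := by
              by_contra hyt
              have h3 := hgap T t y htT hy (by omega)
              have h4 := Fin.le_def.mp hcb
              rw [hvimg y hy, hvb] at h4
              omega
            exact Finset.mem_insert_of_mem
              (Finset.mem_image_of_mem _ (Finset.mem_filter.mpr ⟨hy, hyt⟩))
        have hr2 : (T.filter (· ≤ t)).card ≤ r - 2 := by
          have hsub2 : T.filter (· ≤ t) ⊆ T.erase s := by
            intro z hz
            rw [Finset.mem_filter] at hz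
            exact Finset.mem_erase.mpr ⟨by omega, hz.1⟩
          calc (T.filter (· ≤ t)).card ≤ (T.erase s).card := Finset.card_le_card hsub2
            _ = r - 1 - 1 := by rw [Finset.card_erase_of_mem hsT, hTc]
            _ ≤ r - 2 := by omega
        have h5 := Finset.card_le_card hsubf
        have h6 := Finset.card_insert_le ((f T t + 1 : ℕ) : Fin n)
          ((T.filter (· ≤ t)).image (fun y => ((f T y : ℕ) : Fin n)))
        have h7 := Finset.card_image_le (f := fun y => ((f T y : ℕ) : Fin n))
          (s := T.filter (· ≤ t))
        omega
  have hinj2 : Set.InjOn Φ ↑D := by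
    rintro ⟨T1, t1⟩ hq1 ⟨T2, t2⟩ hq2 heq
    obtain ⟨hTs1, hTc1, htT1, s1, hsT1, hts1⟩ := hDmem T1 t1 (Finset.mem_coe.mp hq1)
    obtain ⟨hTs2, hTc2, htT2, s2, hsT2, hts2⟩ := hDmem T2 t2 (Finset.mem_coe.mp hq2)
    have hb1 := hbnd T1 hTs1 hTc1
    have hb2 := hbnd T2 hTs2 hTc2
    have hΦ1 : Φ ⟨T1, t1⟩ = (insert (f T1 t1 + 1) (T1.image (f T1))).image
        (fun a : ℕ => (a : Fin n)) := by
      simp only [hΦ, Finset.image_insert, Finset.image_image]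
      rfl
    have hΦ2 : Φ ⟨T2, t2⟩ = (insert (f T2 t2 + 1) (T2.image (f T2))).image
        (fun a : ℕ => (a : Fin n)) := by
      simp only [hΦ, Finset.image_insert, Finset.image_image]
      rfl
    have hEb1 : ∀ z ∈ insert (f T1 t1 + 1) (T1.image (f T1)), z < n := by
      intro z hz
      rw [Finset.mem_insert] at hz
      rcases hz with rfl | hz
      · have := hb1 t1 htT1; omega
      · obtain ⟨y, hy, rfl⟩ := Finset.mem_image.mp hz
        have := hb1 y hy; omega
    have hEb2 : ∀ z ∈ insert (f T2 t2 + 1) (T2.image (f T2)), z < n := by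
      intro z hz
      rw [Finset.mem_insert] at hz
      rcases hz with rfl | hz
      · have := hb2 t2 htT2; omega
      · obtain ⟨y, hy, rfl⟩ := Finset.mem_image.mp hz
        have := hb2 y hy; omega
    have hback1 : (Φ ⟨T1, t1⟩).image Fin.val = insert (f T1 t1 + 1) (T1.image (f T1)) := by
      calc (Φ ⟨T1, t1⟩).image Fin.val
          = (insert (f T1 t1 + 1) (T1.image (f T1))).image (Fin.val ∘ (fun a : ℕ => (a : Fin n))) := by
            rw [hΦ1, Finset.image_image]
        _ = (insert (f T1 t1 + 1) (T1.image (f T1))).image id :=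
            Finset.image_congr (fun z hz => hval z (hEb1 z (Finset.mem_coe.mp hz)))
        _ = _ := Finset.image_id
    have hback2 : (Φ ⟨T2, t2⟩).image Fin.val = insert (f T2 t2 + 1) (T2.image (f T2)) := by
      calc (Φ ⟨T2, t2⟩).image Fin.val
          = (insert (f T2 t2 + 1) (T2.image (f T2))).image (Fin.val ∘ (fun a : ℕ => (a : Fin n))) := by
            rw [hΦ2, Finset.image_image]
        _ = (insert (f T2 t2 + 1) (T2.image (f T2))).image id :=
            Finset.image_congr (fun z hz => hval z (hEb2 z (Finset.mem_coe.mp hz)))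
        _ = _ := Finset.image_id
    have hE12 : insert (f T1 t1 + 1) (T1.image (f T1)) = insert (f T2 t2 + 1) (T2.image (f T2)) := by
      rw [← hback1, ← hback2, heq]
    have hfeq : f T1 t1 = f T2 t2 := by
      refine hupair T2 t2 htT2 (f T1 t1) ?_ ?_
      · rw [← hE12]
        exact Finset.mem_insert_of_mem (Finset.mem_image_of_mem _ htT1)
      · rw [← hE12]
        exact Finset.mem_insert_self _ _
    have hS : T1.image (f T1) = T2.image (f T2) := by
      have e1 : (insert (f T1 t1 + 1) (T1.image (f T1))).erase (f T1 t1 + 1) = T1.image (f T1) :=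
        Finset.erase_insert (hnm T1 t1 htT1)
      have e2 : (insert (f T2 t2 + 1) (T2.image (f T2))).erase (f T2 t2 + 1) = T2.image (f T2) :=
        Finset.erase_insert (hnm T2 t2 htT2)
      rw [← e1, ← e2, hE12, hfeq]
    have hT1r : (T1.image (f T1)).image
        (fun z => z - 2 * (((T1.image (f T1)).filter (· < z)).card)) = T1 := by
      calc (T1.image (f T1)).image (fun z => z - 2 * (((T1.image (f T1)).filter (· < z)).card))
          = T1.image ((fun z => z - 2 * (((T1.image (f T1)).filter (· < z)).card)) ∘ (f T1)) :=
            Finset.image_image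
        _ = T1.image id := Finset.image_congr (fun z hz => hgS T1 z (Finset.mem_coe.mp hz))
        _ = T1 := Finset.image_id
    have hT2r : (T2.image (f T2)).image
        (fun z => z - 2 * (((T2.image (f T2)).filter (· < z)).card)) = T2 := by
      calc (T2.image (f T2)).image (fun z => z - 2 * (((T2.image (f T2)).filter (· < z)).card))
          = T2.image ((fun z => z - 2 * (((T2.image (f T2)).filter (· < z)).card)) ∘ (f T2)) :=
            Finset.image_image
        _ = T2.image id := Finset.image_congr (fun z hz => hgS T2 z (Finset.mem_coe.mp hz))
        _ = T2 := Finset.image_id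
    have hTT : T2 = T1 := by
      rw [← hT1r, hS, hT2r]
    subst hTT
    have ht12 : t1 = t2 := hfinj T2 t1 t2 htT1 htT2 hfeq
    rw [ht12]
  calc m.choose (r-1) * (r-2) = D.card := hDcard.symm
    _ ≤ (Finset.univ.filter P).card := Finset.card_le_card_of_injOn Φ hmaps hinj2

/-- Let `r ≥ 3` and `n > r+2`, with `Ω_n = {1 < 2 < ... < n}` identified
with `Fin n` (vertex `x+1 ↔ x : Fin n`). The cg `r`-graph of all `r`-sets
`{a₁ < a₂ < ... < a_r}` (integer inequalities) with `1 < a₁`, `a_r < n` and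
`a_i = a_{i−1} + 1` for some `2 ≤ i ≤ r−1` contains no crossing `r`-path `P_r^r`.
Consequently, for every `ε > 0` there is `N` such that for all `n ≥ N`,
`ex_↻(n, P_r^r) ≥ (1−ε)(r−2)·C(n, r−1)`.
(The rank of `b` in `e` is `|{c ∈ e : c ≤ b}|`, so `b = a_i` iff the rank of `b` is `i`;
since `b` has a predecessor in `e` its rank is automatically at least `2`.) -/
theorem stmt15 (r : ℕ) (hr : 3 ≤ r) :
    (∀ n : ℕ, r + 2 < n → ∀ H : Finset (Finset (Fin n)),
      (∀ e : Finset (Fin n), e ∈ H ↔ (e.card = r ∧ (∀ c ∈ e, 1 ≤ (c : ℕ) ∧ (c : ℕ) < n - 1) ∧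
        ∃ a ∈ e, ∃ b ∈ e, (b : ℕ) = (a : ℕ) + 1 ∧
          (e.filter (fun c => c ≤ b)).card ≤ r - 1)) →
      ¬ ∃ v : ℕ → Fin n, IsCycCrossPath r r H v) ∧
    (∀ ε : ℝ, 0 < ε → ∃ N : ℕ, ∀ n : ℕ, N ≤ n →
      (1 - ε) * ((r : ℝ) - 2) * (n.choose (r - 1) : ℝ) ≤ (exCycP n r r : ℝ)) := by
  constructor
  · intro n _hn H hH
    exact part1 r hr n H hH
  · intro ε hε
    refine ⟨2*r + 5 + ⌈(2*(r:ℝ)*((r:ℝ)-1))/ε⌉₊, ?_⟩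
    intro n hn
    have hn1 : 2*r + 5 ≤ n := by omega
    have hnC : ⌈(2*(r:ℝ)*((r:ℝ)-1))/ε⌉₊ ≤ n := by omega
    have hεn : 2*(r:ℝ)*((r:ℝ)-1) ≤ ε * n := by
      have h1 : (⌈(2*(r:ℝ)*((r:ℝ)-1))/ε⌉₊ : ℝ) ≤ (n:ℝ) := by exact_mod_cast hnC
      have h2 : (2*(r:ℝ)*((r:ℝ)-1))/ε ≤ (⌈(2*(r:ℝ)*((r:ℝ)-1))/ε⌉₊ : ℝ) := Nat.le_ceil _
      calc 2*(r:ℝ)*((r:ℝ)-1) = (2*(r:ℝ)*((r:ℝ)-1))/ε * ε := by field_simp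
        _ ≤ (n:ℝ) * ε := mul_le_mul_of_nonneg_right (h2.trans h1) hε.le
        _ = ε * n := mul_comm _ _
    obtain ⟨H, hH, hcard⟩ := Hcard r n hr hn1
    have hnopath := part1 r hr n H hH
    have hsup : H.card ≤ exCycP n r r := by
      unfold exCycP
      refine le_csSup ⟨Fintype.card (Finset (Fin n)), ?_⟩
        ⟨H, fun e he => ((hH e).mp he).1, hnopath, rfl⟩
      rintro m ⟨H', -, -, rfl⟩
      exact Finset.card_le_univ H'
    have hchoose := choose_shift (r-2) (2*r) n
    have hk : r - 2 + 1 = r - 1 := by omega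
    rw [hk] at hchoose
    have hid := choose_id r n (by omega) (by omega)
    have hcast1 : ((n.choose (r-1) : ℕ) : ℝ) ≤ ((n - 2*r).choose (r-1) : ℝ)
        + 2*(r:ℝ) * (((n-1).choose (r-2) : ℕ) : ℝ) := by exact_mod_cast hchoose
    have hr1R : ((r - 1 : ℕ) : ℝ) = (r:ℝ) - 1 := by
      rw [Nat.cast_sub (by omega : 1 ≤ r)]; norm_num
    have hr2R : ((r - 2 : ℕ) : ℝ) = (r:ℝ) - 2 := by
      rw [Nat.cast_sub (by omega : 2 ≤ r)]; norm_num
    have hcast2 : (n:ℝ) * (((n-1).choose (r-2) : ℕ) : ℝ) = ((n.choose (r-1) : ℕ) : ℝ) * ((r:ℝ)-1) := by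
      rw [← hr1R]; exact_mod_cast hid
    have hnR : (0:ℝ) < (n:ℝ) := by
      have : 0 < n := by omega
      exact_mod_cast this
    have hstep : 2*(r:ℝ) * (((n-1).choose (r-2) : ℕ) : ℝ) ≤ ε * ((n.choose (r-1) : ℕ) : ℝ) := by
      refine le_of_mul_le_mul_left ?_ hnR
      calc (n:ℝ) * (2*(r:ℝ) * (((n-1).choose (r-2) : ℕ) : ℝ))
          = 2*(r:ℝ) * ((n:ℝ) * (((n-1).choose (r-2) : ℕ) : ℝ)) := by ring
        _ = 2*(r:ℝ) * (((n.choose (r-1) : ℕ) : ℝ) * ((r:ℝ)-1)) := by rw [hcast2]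
        _ = (2*(r:ℝ)*((r:ℝ)-1)) * ((n.choose (r-1) : ℕ) : ℝ) := by ring
        _ ≤ (ε * (n:ℝ)) * ((n.choose (r-1) : ℕ) : ℝ) :=
            mul_le_mul_of_nonneg_right hεn (Nat.cast_nonneg _)
        _ = (n:ℝ) * (ε * ((n.choose (r-1) : ℕ) : ℝ)) := by ring
    have hfin1 : (1-ε) * ((n.choose (r-1) : ℕ) : ℝ) ≤ (((n - 2*r).choose (r-1) : ℕ) : ℝ) := by
      linarith
    calc (1-ε) * ((r:ℝ)-2) * ((n.choose (r-1) : ℕ) : ℝ)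
        = ((r:ℝ)-2) * ((1-ε) * ((n.choose (r-1) : ℕ) : ℝ)) := by ring
      _ ≤ ((r:ℝ)-2) * (((n - 2*r).choose (r-1) : ℕ) : ℝ) := by
          refine mul_le_mul_of_nonneg_left hfin1 ?_
          have : (3:ℝ) ≤ (r:ℝ) := by exact_mod_cast hr
          linarith
      _ = (((n - 2*r).choose (r-1) * (r-2) : ℕ) : ℝ) := by
          rw [← hr2R]; push_cast; ring
      _ ≤ (H.card : ℝ) := by exact_mod_cast hcard
      _ ≤ (exCycP n r r : ℝ) := by exact_mod_cast hsup
end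

section
/- Let k ≥ 2, r ≥ 2 and n ≥ rk. Fix a set S of k−1 vertices of Ω_n, and let H be the cg r-graph whose edges are all r-element subsets R of Ω_n such that R ∩ S ≠ ∅ or R contains two distinct vertices at clockwise cyclic distance at most k−1. Then H contains no crossing k-matching M_k^r. Moreover, for fixed k and r there is a constant c > 0 such that for all n, ex_↻(n, M_k^r) ≥ (k−1) · r · C(n, r−1) − c · n^{r−2}. -/
/-- `IsCycCrossMatching r k H v` says that the distinct vertices
`v 0 < v 1 < ... < v (r*k-1)` (in the clockwise cyclic order on `Fin n`) carry a crossing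
`k`-matching `M_k^r` in `H`: the `k` pairwise disjoint edges
`{v i, v (i+k), v (i+2k), ..., v (i+(r-1)k)}` for `0 ≤ i ≤ k-1` all belong to `H`. -/
def IsCycCrossMatching (r k : ℕ) {n : ℕ} (H : Finset (Finset (Fin n))) (v : ℕ → Fin n) : Prop :=
  CycChain (r * k) v ∧
  ∀ i : ℕ, i < k → Finset.image (fun j => v (i + j * k)) (Finset.range r) ∈ H

/-- `IsOrdCrossMatching r k H v` says that the distinct vertices
`v 0 < v 1 < ... < v (r*k-1)` (in the linear order on `Fin n`) carry a crossing
`k`-matching `M_k^r` in `H`: the `k` pairwise disjoint edges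
`{v i, v (i+k), v (i+2k), ..., v (i+(r-1)k)}` for `0 ≤ i ≤ k-1` all belong to `H`. -/
def IsOrdCrossMatching (r k : ℕ) {n : ℕ} (H : Finset (Finset (Fin n))) (v : ℕ → Fin n) : Prop :=
  (∀ i j : ℕ, i < j → j < r * k → v i < v j) ∧
  ∀ i : ℕ, i < k → Finset.image (fun j => v (i + j * k)) (Finset.range r) ∈ H

/-- `exCycM n r k` is the maximum number of edges in an `n`-vertex convex geometric `r`-graph
containing no crossing `k`-matching `M_k^r`. -/
noncomputable def exCycM (n r k : ℕ) : ℕ :=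
  sSup {m | ∃ H : Finset (Finset (Fin n)),
    (∀ e ∈ H, e.card = r) ∧ (¬ ∃ v : ℕ → Fin n, IsCycCrossMatching r k H v) ∧ H.card = m}

/-- `exOrdM n r k` is the maximum number of edges in an `n`-vertex ordered `r`-graph
containing no crossing `k`-matching `M_k^r`. -/
noncomputable def exOrdM (n r k : ℕ) : ℕ :=
  sSup {m | ∃ H : Finset (Finset (Fin n)),
    (∀ e ∈ H, e.card = r) ∧ (¬ ∃ v : ℕ → Fin n, IsOrdCrossMatching r k H v) ∧ H.card = m}

/-!
In a crossing `k`-matching the `k` edges are pairwise disjoint, so one of them misses the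
`k - 1` vertices of `S`. Between two cyclically consecutive vertices of that edge lie `k - 1`
further vertices of the matching, so all its vertices are at cyclic distance at least `k` and
the edge is not in `H`.

For the lower bound take `S = {0, …, k - 2}`. An `r`-set outside `H` is then a subset of
`{k - 1, …, n - 1}` with consecutive elements more than `k - 1` apart; subtracting
`(k - 1)(i + 1)` from its `i`-th smallest element maps these sets injectively to `r`-subsets of
an `(n - (k - 1) r)`-set. Hence `|H| ≥ C(n, r) - C(n - (k - 1) r, r)`, which is
`(k - 1) r C(n, r - 1)` up to `O(n ^ (r - 2))`.
-/

open Finset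

namespace CycChain

variable {n L : ℕ} {w : ℕ → Fin n}

theorem val_sub_add_le (hw : CycChain L w) {p q : ℕ} (hpq : p ≤ q) (hq : q < L) :
    (w p - w 0 : Fin n).val + (q - p) ≤ (w q - w 0 : Fin n).val := by
  induction q, hpq using Nat.le_induction with
  | base => simp
  | succ q hpq ih =>
    have hstep : (w q - w 0 : Fin n).val < (w (q + 1) - w 0 : Fin n).val :=
      hw q (q + 1) q.lt_succ_self hq
    have := ih (by omega)
    omega

theorem le_val_sub (hw : CycChain L w) {p q : ℕ} (hpq : p ≤ q) (hq : q < L) :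
    q - p ≤ (w q - w p : Fin n).val := by
  have := NeZero.of_pos (w 0).pos
  have hpq' := hw.val_sub_add_le hpq hq
  rw [← sub_sub_sub_cancel_right (w q) (w p) (w 0),
    Fin.coe_sub_iff_le.mpr (Fin.le_def.mpr (by omega))]
  omega

theorem le_val_sub_of_lt (hw : CycChain L w) {p q : ℕ} (hpq : p < q) (hq : q < L) :
    L - (q - p) ≤ (w p - w q : Fin n).val := by
  have := NeZero.of_pos (w 0).pos
  have hp := hw.val_sub_add_le p.zero_le (by omega)
  have hpq' := hw.val_sub_add_le hpq.le hq
  have hqL := hw.val_sub_add_le (show q ≤ L - 1 by omega) (by omega)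
  have hlast := (w (L - 1) - w 0).isLt
  simp only [sub_self, Fin.val_zero, zero_add, Nat.sub_zero] at hp
  rw [← sub_sub_sub_cancel_right (w p) (w q) (w 0),
    Fin.coe_sub_iff_lt.mpr (Fin.lt_def.mpr (by omega))]
  omega

theorem eq_of_apply_eq (hw : CycChain L w) {p q : ℕ} (hp : p < L) (hq : q < L)
    (hpq : w p = w q) : p = q := by
  have := NeZero.of_pos (w 0).pos
  by_contra hne
  rcases lt_or_gt_of_ne hne with h | h
  · have := hw.le_val_sub h.le hq
    rw [hpq, sub_self, Fin.val_zero] at this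
    omega
  · have := hw.le_val_sub h.le hp
    rw [hpq, sub_self, Fin.val_zero] at this
    omega

variable {r k : ℕ}

theorem le_val_sub_of_ne (hw : CycChain (r * k) w) {i a b : ℕ} (hi : i < k) (ha : a < r)
    (hb : b < r) (hab : a ≠ b) : k ≤ (w (i + b * k) - w (i + a * k) : Fin n).val := by
  have hbk : b * k + k ≤ r * k := by nlinarith
  have hak : a * k + k ≤ r * k := by nlinarith
  rcases lt_or_gt_of_ne hab with h | h
  · have : a * k + k ≤ b * k := by nlinarith
    have := hw.le_val_sub (p := i + a * k) (q := i + b * k) (by omega) (by omega)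
    omega
  · have : b * k + k ≤ a * k := by nlinarith
    have := hw.le_val_sub_of_lt (p := i + b * k) (q := i + a * k) (by omega) (by omega)
    omega

theorem exists_disjoint_edge (hw : CycChain (r * k) w) {S : Finset (Fin n)} (hS : #S < k) :
    ∃ i < k, Disjoint ((range r).image fun j => w (i + j * k)) S := by
  by_contra! hmeet
  have : ∀ i ∈ range k, ∃ j < r, w (i + j * k) ∈ S := by
    intro i hi
    obtain ⟨x, hx, hxS⟩ := not_disjoint_iff.mp (hmeet i (mem_range.mp hi))
    obtain ⟨j, hj, rfl⟩ := mem_image.mp hx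
    exact ⟨j, mem_range.mp hj, hxS⟩
  choose! f hfr hfS using this
  have hidx {i j : ℕ} (hi : i < k) (hj : j < r) : i + j * k < r * k := by
    simpa [mul_comm] using Nat.add_mul_lt_mul_of_lt_of_lt hi hj
  have hinj : Set.InjOn (fun i => w (i + f i * k)) (range k) := by
    intro i hi i' hi' h
    rw [coe_range, Set.mem_Iio] at hi hi'
    have := congrArg (· % k) (hw.eq_of_apply_eq (hidx hi (hfr i (mem_range.2 hi)))
      (hidx hi' (hfr i' (mem_range.2 hi'))) h)
    simpa [Nat.mod_eq_of_lt hi, Nat.mod_eq_of_lt hi'] using this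
  have := card_le_card_of_injOn _ (fun i hi => hfS i hi) hinj
  simp only [card_range] at this
  omega

end CycChain

theorem not_exists_isCycCrossMatching {r k n : ℕ} {S : Finset (Fin n)} (hS : #S < k)
    {H : Finset (Finset (Fin n))}
    (hH : ∀ e ∈ H, (e ∩ S).Nonempty ∨ ∃ u ∈ e, ∃ v ∈ e, u ≠ v ∧ ((v - u : Fin n) : ℕ) ≤ k - 1) :
    ¬ ∃ w : ℕ → Fin n, IsCycCrossMatching r k H w := by
  rintro ⟨w, hw, hedge⟩
  obtain ⟨i, hi, hdisj⟩ := hw.exists_disjoint_edge hS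
  rcases hH _ (hedge i hi) with hmeet | ⟨u, hu, v, hv, huv, hclose⟩
  · exact hmeet.ne_empty (disjoint_iff_inter_eq_empty.mp hdisj)
  · simp only [mem_image, mem_range] at hu hv
    obtain ⟨a, ha, rfl⟩ := hu
    obtain ⟨b, hb, rfl⟩ := hv
    have := hw.le_val_sub_of_ne hi ha hb (by rintro rfl; exact huv rfl)
    omega

/-- Adds `g * (i + 1)` to the `i`-th smallest element of `t`, counting from `i = 0`. -/
def stretch (g : ℕ) (t : Finset ℕ) : Finset ℕ :=
  t.image fun y => y + g * (#{z ∈ t | z < y} + 1)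

theorem stretch_insert_of_forall_lt {g m : ℕ} {t : Finset ℕ} (ht : ∀ y ∈ t, y < m) :
    stretch g (insert m t) = insert (m + g * (#t + 1)) (stretch g t) := by
  have hrank : {z ∈ insert m t | z < m} = t := by
    rw [filter_insert, if_neg (lt_irrefl m), filter_true_of_mem ht]
  rw [stretch, image_insert, hrank, stretch]
  congr 1
  refine image_congr fun y hy => ?_
  simp only [filter_insert, if_neg (not_lt.2 (ht y hy).le)]

theorem exists_stretch_eq {g : ℕ} (s : Finset ℕ) (N : ℕ)
    (hsep : ∀ u ∈ s, ∀ v ∈ s, u < v → u + g < v) (hbd : ∀ x ∈ s, g ≤ x ∧ x < N) :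
    ∃ t ⊆ range (N - g * #s), #t = #s ∧ stretch g t = s := by
  induction s using Finset.induction_on_max generalizing N with
  | empty => exact ⟨∅, empty_subset _, rfl, rfl⟩
  | insert m s hlt ih =>
    have hm : m ∉ s := fun h => lt_irrefl m (hlt m h)
    obtain ⟨t, hts, hcard, hst⟩ := ih (m - g)
      (fun u hu v hv => hsep u (mem_insert_of_mem hu) v (mem_insert_of_mem hv))
      (fun x hx => ⟨(hbd x (mem_insert_of_mem hx)).1,
        by have := hsep x (mem_insert_of_mem hx) m (mem_insert_self m s) (hlt x hx); omega⟩)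
    have hmN := hbd m (mem_insert_self m s)
    have ht : ∀ y ∈ t, y < m - g * (#s + 1) := fun y hy => by
      have := mem_range.mp (hts hy)
      rw [Nat.mul_succ]
      omega
    have hgm : g * (#s + 1) ≤ m := by
      rcases t.eq_empty_or_nonempty with rfl | ⟨y, hy⟩
      · rw [← hcard, card_empty, zero_add, mul_one]
        exact hmN.1
      · have := ht y hy
        omega
    refine ⟨insert (m - g * (#s + 1)) t, ?_, ?_, ?_⟩
    · rw [card_insert_of_notMem hm]
      intro y hy
      rw [mem_range]
      rcases mem_insert.mp hy with rfl | hy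
      · omega
      · have := ht y hy
        omega
    · rw [card_insert_of_notMem hm, card_insert_of_notMem fun h => lt_irrefl _ (ht _ h), hcard]
    · rw [stretch_insert_of_forall_lt ht, hcard, Nat.sub_add_cancel hgm, hst]

theorem card_le_choose_of_separated {g r N : ℕ} {D : Finset (Finset ℕ)}
    (hD : ∀ s ∈ D, #s = r ∧ (∀ u ∈ s, ∀ v ∈ s, u < v → u + g < v) ∧ ∀ x ∈ s, g ≤ x ∧ x < N) :
    #D ≤ (N - g * r).choose r :=
  calc #D ≤ #((powersetCard r (range (N - g * r))).image (stretch g)) := by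
        refine card_le_card fun s hs => ?_
        obtain ⟨rfl, hsep, hbd⟩ := hD s hs
        obtain ⟨t, hts, hcard, hst⟩ := exists_stretch_eq s N hsep hbd
        exact mem_image.2 ⟨t, mem_powersetCard.2 ⟨hts, hcard⟩, hst⟩
    _ ≤ (N - g * r).choose r := card_image_le.trans (by rw [card_powersetCard, card_range])

theorem Nat.choose_succ_add_mul_choose_le (a b j : ℕ) :
    a.choose (j + 1) + b * a.choose j ≤ (a + b).choose (j + 1) := by
  induction b with
  | zero => simp
  | succ b ih =>
    have := Nat.choose_le_choose j (a.le_add_right b)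
    rw [← add_assoc, Nat.choose_succ_succ', add_one_mul]
    omega

theorem Nat.choose_succ_le_add_mul_choose (a b j : ℕ) :
    (a + b).choose (j + 1) ≤ a.choose (j + 1) + b * (a + b).choose j := by
  induction b with
  | zero => simp
  | succ b ih =>
    have hmono := Nat.choose_le_choose j (Nat.le_add_right (a + b) 1)
    have := Nat.mul_le_mul_left b hmono
    rw [← add_assoc, Nat.choose_succ_succ', add_one_mul]
    omega

theorem Nat.mul_choose_succ_le (m b j : ℕ) :
    b * (m + b).choose (j + 1) ≤
      (m + b).choose (j + 2) - m.choose (j + 2) + b ^ 2 * (m + b).choose j := by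
  have hlow : m.choose (j + 2) + b * m.choose (j + 1) ≤ (m + b).choose (j + 2) :=
    Nat.choose_succ_add_mul_choose_le m b (j + 1)
  calc b * (m + b).choose (j + 1) ≤ b * (m.choose (j + 1) + b * (m + b).choose j) :=
        Nat.mul_le_mul_left b (Nat.choose_succ_le_add_mul_choose m b j)
    _ = b * m.choose (j + 1) + b ^ 2 * (m + b).choose j := by ring
    _ ≤ _ := by omega

theorem le_exCycM {n r k : ℕ} {H : Finset (Finset (Fin n))} (hr : ∀ e ∈ H, #e = r)
    (hH : ¬ ∃ v : ℕ → Fin n, IsCycCrossMatching r k H v) : #H ≤ exCycM n r k :=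
  le_csSup ⟨Fintype.card (Finset (Fin n)), by rintro m ⟨H', -, -, rfl⟩; exact card_le_univ H'⟩
    ⟨H, hr, hH, rfl⟩

theorem choose_sub_choose_le_exCycM {n r k : ℕ} (hk : 0 < k) :
    n.choose r - (n - (k - 1) * r).choose r ≤ exCycM n r k := by
  classical
  set S : Finset (Fin n) := {v | (v : ℕ) < k - 1}
  set P : Finset (Fin n) → Prop := fun e => (e ∩ S).Nonempty ∨
    ∃ u ∈ e, ∃ v ∈ e, u ≠ v ∧ ((v - u : Fin n) : ℕ) ≤ k - 1
  have hS : #S < k := by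
    have := card_le_card_of_injOn Fin.val (s := S) (t := range (k - 1))
      (fun v hv => mem_range.2 (mem_filter.1 hv).2) Fin.val_injective.injOn
    rw [card_range] at this
    omega
  have hH : #{e ∈ powersetCard r univ | P e} ≤ exCycM n r k :=
    le_exCycM (fun e he => mem_powersetCard_univ.1 (mem_filter.1 he).1)
      (not_exists_isCycCrossMatching hS fun e he => (mem_filter.1 he).2)
  have hD : #{e ∈ powersetCard r univ | ¬ P e} ≤ (n - (k - 1) * r).choose r := by
    rw [← card_map (mapEmbedding Fin.valEmbedding).toEmbedding]
    refine card_le_choose_of_separated fun s hs => ?_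
    obtain ⟨R, hR, rfl⟩ := mem_map.1 hs
    obtain ⟨hRr, hRP⟩ := mem_filter.1 hR
    simp only [P, not_or, not_nonempty_iff_eq_empty, not_exists, not_and, not_le] at hRP
    obtain ⟨hRS, hfar⟩ := hRP
    refine ⟨by simpa using mem_powersetCard_univ.1 hRr, ?_, ?_⟩
    · simp only [RelEmbedding.coe_toEmbedding, mapEmbedding_apply, mem_map,
        Fin.valEmbedding_apply, forall_exists_index, and_imp]
      rintro _ u hu rfl _ v hv rfl huv
      have := hfar u hu v hv (Fin.ne_of_lt huv)
      rw [Fin.coe_sub_iff_le.mpr huv.le] at this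
      omega
    · simp only [RelEmbedding.coe_toEmbedding, mapEmbedding_apply, mem_map,
        Fin.valEmbedding_apply, forall_exists_index, and_imp]
      rintro _ v hv rfl
      refine ⟨not_lt.1 fun hvS => ?_, v.isLt⟩
      exact eq_empty_iff_forall_notMem.1 hRS v
        (mem_inter.2 ⟨hv, mem_filter.2 ⟨mem_univ v, hvS⟩⟩)
  have hsplit : #{e ∈ powersetCard r univ | P e} + #{e ∈ powersetCard r univ | ¬ P e} =
      n.choose r := by
    rw [card_filter_add_card_filter_not, card_powersetCard, card_univ, Fintype.card_fin]
  omega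

theorem mul_choose_le_exCycM_add {k : ℕ} (hk : 0 < k) (n j : ℕ) :
    (k - 1) * (j + 2) * n.choose (j + 1) ≤
      exCycM n (j + 2) k + ((k - 1) * (j + 2)) ^ 2 * n ^ j := by
  set b := (k - 1) * (j + 2)
  rcases le_or_gt b n with hbn | hnb
  · obtain ⟨m, rfl⟩ := Nat.exists_eq_add_of_le' hbn
    have hex := choose_sub_choose_le_exCycM (n := m + b) (r := j + 2) hk
    rw [Nat.add_sub_cancel] at hex
    calc b * (m + b).choose (j + 1)
        ≤ (m + b).choose (j + 2) - m.choose (j + 2) + b ^ 2 * (m + b).choose j :=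
          Nat.mul_choose_succ_le m b j
      _ ≤ exCycM (m + b) (j + 2) k + b ^ 2 * (m + b) ^ j :=
          add_le_add hex (Nat.mul_le_mul_left _ (Nat.choose_le_pow _ _))
  · calc b * n.choose (j + 1) ≤ b * (n ^ j * b) := by
          gcongr
          exact (Nat.choose_le_pow n (j + 1)).trans (by rw [pow_succ]; gcongr)
      _ = b ^ 2 * n ^ j := by ring
      _ ≤ exCycM n (j + 2) k + b ^ 2 * n ^ j := Nat.le_add_left _ _

/-- Let `k ≥ 2`, `r ≥ 2` and `n ≥ rk`. Fix a set `S` of `k−1` vertices of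
`Fin n` and let `H` consist of all `r`-sets `R` meeting `S`, or containing two distinct
vertices at clockwise cyclic distance at most `k−1` (one reachable from the other in at most
`k−1` clockwise steps). Then `H` has no crossing `k`-matching `M_k^r`. Moreover, for fixed
`k` and `r` there is `c > 0` with
`ex_↻(n, M_k^r) ≥ (k−1)·r·C(n, r−1) − c·n^(r−2)` for all `n`. -/
theorem stmt18 (r k : ℕ) (hk : 2 ≤ k) (hr : 2 ≤ r) :
    (∀ n : ℕ, r * k ≤ n → ∀ S : Finset (Fin n), S.card = k - 1 →
      ∀ H : Finset (Finset (Fin n)),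
      (∀ e : Finset (Fin n), e ∈ H ↔ (e.card = r ∧ ((e ∩ S).Nonempty ∨
        ∃ u ∈ e, ∃ v ∈ e, u ≠ v ∧ ((v - u : Fin n) : ℕ) ≤ k - 1))) →
      ¬ ∃ w : ℕ → Fin n, IsCycCrossMatching r k H w) ∧
    (∃ c : ℝ, 0 < c ∧ ∀ n : ℕ,
      ((k : ℝ) - 1) * (r : ℝ) * (n.choose (r - 1) : ℝ) - c * (n : ℝ) ^ (r - 2) ≤
        (exCycM n r k : ℝ)) := by
  refine ⟨fun n _ S hS H hH => not_exists_isCycCrossMatching (by omega)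
    fun e he => ((hH e).1 he).2, ?_⟩
  obtain ⟨j, rfl⟩ := Nat.exists_eq_add_of_le' hr
  have hb : 0 < (k - 1) * (j + 2) := Nat.mul_pos (by omega) (by omega)
  refine ⟨(((k - 1) * (j + 2) : ℕ) : ℝ) ^ 2, by positivity, fun n => ?_⟩
  have key := mul_choose_le_exCycM_add (by omega : 0 < k) n j
  rw [sub_le_iff_le_add, show j + 2 - 1 = j + 1 by omega, show j + 2 - 2 = j by omega,
    show (k : ℝ) - 1 = ((k - 1 : ℕ) : ℝ) by rw [Nat.cast_sub (by omega), Nat.cast_one]]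
  exact_mod_cast key
end
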